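/- arXiv:1610.06915 — 7 statements merged into one kernel-verified Lean document; each statement's English description precedes it below -/
import Mathlib

section
/- Let F be a field of characteristic 2 and (D,θ) an F-division algebra with involution. A hermitian form φ = (V,h) over (D,θ) is direct if and only if its associated quadratic form (V, q_h), where q_h(x) = h(x,x) + Alt(D,θ), is anisotropic. Moreover, every anisotropic totally singular quadratic form over (D,θ) is the associated quadratic form of some direct hermitian form over (D,θ). -/
noncomputable section GenQuadForm

open scoped TensorProduct

/-- An `F`-linear involution (of the first kind) on the `F`-algebra `D`. -/
def IsFInvolution (F : Type*) {D : Type*} [Field F] [Ring D] [Algebra F D]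
    (θ : D → D) : Prop :=
  (∀ a b : D, θ (a + b) = θ a + θ b) ∧
  (∀ (c : F) (a : D), θ (c • a) = c • θ a) ∧
  (∀ a b : D, θ (a * b) = θ b * θ a) ∧
  (∀ a : D, θ (θ a) = a)

/-- `Sym(D,θ)`, the set of symmetric elements. -/
def SymSet {D : Type*} (θ : D → D) : Set D := {a | θ a = a}

/-- `Alt(D,θ) = {a - θ a | a ∈ D}`, the set of alternating elements. -/
def AltSet {D : Type*} [Ring D] (θ : D → D) : Set D := {a | ∃ b : D, a = b - θ b}

/-- The right scalar multiple of a vector `x ∈ Dⁿ` by `d ∈ D`. -/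
def rsmul {D : Type*} [Ring D] {n : ℕ} (x : Fin n → D) (d : D) : Fin n → D :=
  fun i => x i * d

/-- `h` is a hermitian form on the (right) `D`-vector space `Dⁿ` with respect to the
involution `θ`: bi-additive, sesquilinear and `θ`-symmetric. (Every `n`-dimensional right
`D`-vector space is isomorphic to `Dⁿ`.) -/
def IsHermForm {D : Type*} [Ring D] (θ : D → D) (n : ℕ)
    (h : (Fin n → D) → (Fin n → D) → D) : Prop :=
  (∀ x x' y : Fin n → D, h (x + x') y = h x y + h x' y) ∧
  (∀ x y y' : Fin n → D, h x (y + y') = h x y + h x y') ∧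
  (∀ (x y : Fin n → D) (d₁ d₂ : D), h (rsmul x d₁) (rsmul y d₂) = θ d₁ * h x y * d₂) ∧
  (∀ x y : Fin n → D, h y x = θ (h x y))

/-- A hermitian form is anisotropic if `h x x = 0` only for `x = 0`. -/
def HermAnisotropic {D : Type*} [Ring D] (n : ℕ)
    (h : (Fin n → D) → (Fin n → D) → D) : Prop :=
  ∀ x : Fin n → D, h x x = 0 → x = 0

/-- A hermitian form is alternating if `h x x ∈ Alt(D,θ)` for all `x`. -/
def HermAlternating {D : Type*} [Ring D] (θ : D → D) (n : ℕ)
    (h : (Fin n → D) → (Fin n → D) → D) : Prop :=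
  ∀ x : Fin n → D, h x x ∈ AltSet θ

/-- A hermitian form is direct if `h x x ∉ Alt(D,θ)` for all `x ≠ 0`. -/
def HermDirect {D : Type*} [Ring D] (θ : D → D) (n : ℕ)
    (h : (Fin n → D) → (Fin n → D) → D) : Prop :=
  ∀ x : Fin n → D, x ≠ 0 → h x x ∉ AltSet θ

/-- A hermitian form is nondegenerate if its radical is trivial. -/
def HermNondegenerate {D : Type*} [Ring D] (n : ℕ)
    (h : (Fin n → D) → (Fin n → D) → D) : Prop :=
  ∀ x : Fin n → D, (∀ y : Fin n → D, h x y = 0) → x = 0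

/-- The diagonal hermitian form `⟨a₁,…,aₙ⟩ʰ` over `(D,θ)`. -/
def diagHerm {D : Type*} [Ring D] (θ : D → D) {n : ℕ} (a : Fin n → D) :
    (Fin n → D) → (Fin n → D) → D :=
  fun x y => ∑ i, θ (x i) * a i * y i

/-- `q` (a representative function of a map `Dⁿ → D/Alt(D,θ)`) is a generalised quadratic form
over `(D,θ)` with polar form `h`: all defining identities are required modulo `Alt(D,θ)`. -/
def IsQuadForm {D : Type*} [Ring D] (θ : D → D) (n : ℕ)
    (q : (Fin n → D) → D) (h : (Fin n → D) → (Fin n → D) → D) : Prop :=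
  IsHermForm θ n h ∧
  (∀ (x : Fin n → D) (d : D), q (rsmul x d) - θ d * q x * d ∈ AltSet θ) ∧
  (∀ x y : Fin n → D, q (x + y) - q x - q y - h x y ∈ AltSet θ)

/-- A quadratic form over `(D,θ)` is isotropic if it vanishes modulo `Alt(D,θ)` at some
nonzero vector. -/
def QuadIsotropic {D : Type*} [Ring D] (θ : D → D) (n : ℕ)
    (q : (Fin n → D) → D) : Prop :=
  ∃ x : Fin n → D, x ≠ 0 ∧ q x ∈ AltSet θ

/-- A quadratic form over `(D,θ)` is anisotropic if it is not isotropic. -/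
def QuadAnisotropic {D : Type*} [Ring D] (θ : D → D) (n : ℕ)
    (q : (Fin n → D) → D) : Prop :=
  ∀ x : Fin n → D, x ≠ 0 → q x ∉ AltSet θ

/-- A quadratic form over `(D,θ)` represents `a ∈ D` if its value at some
nonzero vector is `a + Alt(D,θ)`. -/
def QuadRepresents {D : Type*} [Ring D] (θ : D → D) (n : ℕ)
    (q : (Fin n → D) → D) (a : D) : Prop :=
  ∃ x : Fin n → D, x ≠ 0 ∧ q x - a ∈ AltSet θ

/-- A quadratic form over `(D,θ)` is totally singular if its polar form is identically zero. -/
def QuadTotallySingular {D : Type*} [Ring D] (θ : D → D) (n : ℕ)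
    (q : (Fin n → D) → D) : Prop :=
  IsQuadForm θ n q (fun _ _ => 0)

/-- A quadratic form over `(D,θ)` is nonsingular if its polar form is nondegenerate. -/
def QuadNonsingular {D : Type*} [Ring D] (θ : D → D) (n : ℕ)
    (q : (Fin n → D) → D) : Prop :=
  ∃ h, IsQuadForm θ n q h ∧ HermNondegenerate n h

/-- The diagonal quadratic form `⟨a₁,…,aₙ⟩` over `(D,θ)`. -/
def diagQuad {D : Type*} [Ring D] (θ : D → D) {n : ℕ} (a : Fin n → D) :
    (Fin n → D) → D :=
  fun x => ∑ i, θ (x i) * a i * x i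

/-- `u⁺(D)`: the supremum of the dimensions of anisotropic hermitian forms over `(D,θ)`. -/
def uHermPlus {D : Type*} [DivisionRing D] (θ : D → D) : ℕ∞ :=
  ⨆ n ∈ {n : ℕ | ∃ h, IsHermForm θ n h ∧ HermAnisotropic n h}, (n : ℕ∞)

/-- `u⁺_d(D)`: the supremum of the dimensions of direct hermitian forms over `(D,θ)`. -/
def uHermPlusDirect {D : Type*} [DivisionRing D] (θ : D → D) : ℕ∞ :=
  ⨆ n ∈ {n : ℕ | ∃ h, IsHermForm θ n h ∧ HermDirect θ n h}, (n : ℕ∞)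

/-- `u⁻(D)`: the supremum of the dimensions of anisotropic alternating hermitian forms
over `(D,θ)`. -/
def uHermMinus {D : Type*} [DivisionRing D] (θ : D → D) : ℕ∞ :=
  ⨆ n ∈ {n : ℕ | ∃ h, IsHermForm θ n h ∧ HermAnisotropic n h ∧ HermAlternating θ n h},
    (n : ℕ∞)

/-- `u(D)`: the supremum of the dimensions of anisotropic (generalised) quadratic forms
over `(D,θ)`. -/
def uQuad {D : Type*} [DivisionRing D] (θ : D → D) : ℕ∞ :=
  ⨆ n ∈ {n : ℕ | ∃ q h, IsQuadForm θ n q h ∧ QuadAnisotropic θ n q}, (n : ℕ∞)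

/-- `ũ(D)`: the supremum of the dimensions of anisotropic nonsingular quadratic forms
over `(D,θ)`. -/
def uQuadTilde {D : Type*} [DivisionRing D] (θ : D → D) : ℕ∞ :=
  ⨆ n ∈ {n : ℕ | ∃ q, QuadNonsingular θ n q ∧ QuadAnisotropic θ n q}, (n : ℕ∞)

/-- The polar form of a quadratic form over a field. -/
def polarF {F : Type*} [Field F] {n : ℕ} (q : (Fin n → F) → F) :
    (Fin n → F) → (Fin n → F) → F :=
  fun x y => q (x + y) - q x - q y

/-- A quadratic form over the field `F` (on `Fⁿ`): `q (a • x) = a² q x` and the polar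
form is bilinear. -/
def IsQuadFormField {F : Type*} [Field F] (n : ℕ) (q : (Fin n → F) → F) : Prop :=
  (∀ (a : F) (x : Fin n → F), q (a • x) = a ^ 2 * q x) ∧
  (∀ x x' y : Fin n → F, polarF q (x + x') y = polarF q x y + polarF q x' y) ∧
  (∀ (a : F) (x y : Fin n → F), polarF q (a • x) y = a * polarF q x y)

def QFieldNonsingular {F : Type*} [Field F] (n : ℕ) (q : (Fin n → F) → F) : Prop :=
  ∀ x : Fin n → F, (∀ y : Fin n → F, polarF q x y = 0) → x = 0

def QFieldTotallySingular {F : Type*} [Field F] (n : ℕ) (q : (Fin n → F) → F) : Prop :=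
  ∀ x y : Fin n → F, q (x + y) = q x + q y

def QFieldAnisotropic {F : Type*} [Field F] (n : ℕ) (q : (Fin n → F) → F) : Prop :=
  ∀ x : Fin n → F, q x = 0 → x = 0

/-- `ũ(F)`: the supremum of the dimensions of anisotropic nonsingular quadratic forms
over the field `F`. -/
def uTildeField (F : Type*) [Field F] : ℕ∞ :=
  ⨆ n ∈ {n : ℕ | ∃ q : (Fin n → F) → F,
      IsQuadFormField n q ∧ QFieldNonsingular n q ∧ QFieldAnisotropic n q}, (n : ℕ∞)

/-- The subfield `F² = {a² : a ∈ F}` of a field of characteristic `2`. -/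
def sqSubfield (F : Type*) [Field F] [CharP F 2] : Subfield F :=
  (frobenius F 2).fieldRange

/-- `[F : F²]` as an element of `ℕ ∪ {∞}`. -/
def sqIndex (F : Type*) [Field F] [CharP F 2] : ℕ∞ :=
  Cardinal.toENat (Module.rank (sqSubfield F) F)

/-- `℘(F) = {a² + a : a ∈ F}`. -/
def wpSet (F : Type*) [Field F] : Set F := {a | ∃ b : F, a = b ^ 2 + b}


section AuxStmt1

variable {D : Type*} [Ring D] {θ : D → D}

lemma aux_theta_zero (θadd : ∀ a b : D, θ (a + b) = θ a + θ b) : θ 0 = 0 := by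
  have h := θadd 0 0
  rw [add_zero] at h
  exact left_eq_add.mp h

lemma aux_alt_add (θadd : ∀ a b : D, θ (a + b) = θ a + θ b)
    {a b : D} (ha : a ∈ AltSet θ) (hb : b ∈ AltSet θ) : a + b ∈ AltSet θ := by
  obtain ⟨c, rfl⟩ := ha; obtain ⟨d, rfl⟩ := hb
  exact ⟨c + d, by rw [θadd]; abel⟩

lemma aux_alt_neg (θinv : ∀ a : D, θ (θ a) = a)
    {a : D} (ha : a ∈ AltSet θ) : -a ∈ AltSet θ := by
  obtain ⟨c, rfl⟩ := ha
  exact ⟨θ c, by rw [θinv]; abel⟩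

lemma aux_alt_sub (θadd : ∀ a b : D, θ (a + b) = θ a + θ b)
    (θinv : ∀ a : D, θ (θ a) = a)
    {a b : D} (ha : a ∈ AltSet θ) (hb : b ∈ AltSet θ) : a - b ∈ AltSet θ := by
  rw [sub_eq_add_neg]
  exact aux_alt_add θadd ha (aux_alt_neg θinv hb)

lemma aux_theta_sum (θadd : ∀ a b : D, θ (a + b) = θ a + θ b)
    {ι : Type*} (s : Finset ι) (f : ι → D) :
    θ (∑ i ∈ s, f i) = ∑ i ∈ s, θ (f i) := by
  classical
  induction s using Finset.cons_induction with
  | empty => simpa using aux_theta_zero θadd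
  | cons j s hj ih => rw [Finset.sum_cons, Finset.sum_cons, θadd, ih]

end AuxStmt1

/-- A hermitian form over `(D,θ)` is direct iff its associated quadratic
form `x ↦ h x x + Alt(D,θ)` is anisotropic; moreover every anisotropic totally singular
quadratic form over `(D,θ)` is the associated quadratic form of some direct hermitian
form over `(D,θ)`. -/
theorem stmt1 {F D : Type*} [Field F] [CharP F 2] [DivisionRing D] [Algebra F D]
    [FiniteDimensional F D] [Algebra.IsCentral F D]
    (θ : D → D) (hθ : IsFInvolution F θ) :
    (∀ (n : ℕ) (h : (Fin n → D) → (Fin n → D) → D), IsHermForm θ n h →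
      (HermDirect θ n h ↔ QuadAnisotropic θ n (fun x => h x x))) ∧
    (∀ (n : ℕ) (q : (Fin n → D) → D),
      QuadTotallySingular θ n q → QuadAnisotropic θ n q →
      ∃ hh : (Fin n → D) → (Fin n → D) → D, IsHermForm θ n hh ∧ HermDirect θ n hh ∧
        ∀ x : Fin n → D, hh x x - q x ∈ AltSet θ) := by
  classical
  obtain ⟨θadd, θFsmul, θmul, θinv⟩ := hθ
  haveI : CharP D 2 := charP_of_injective_algebraMap (algebraMap F D).injective 2
  have θone : θ 1 = 1 := by
    have h1 : θ (1 * θ 1) = θ (θ 1) * θ 1 := θmul 1 (θ 1)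
    rw [one_mul, θinv] at h1
    rw [one_mul] at h1
    exact h1.symm
  constructor
  · intro n h _
    exact Iff.rfl
  · intro n q hq hqa
    obtain ⟨-, hscale, hpolar0⟩ := hq
    have hpolar : ∀ x y : Fin n → D, q (x + y) - q x - q y ∈ AltSet θ := by
      intro x y
      have := hpolar0 x y
      simpa using this
    -- the diagonal entries
    set a : Fin n → D := fun i => q (Pi.single i 1) with ha
    -- e_i ≠ 0
    have hene : ∀ i : Fin n, (Pi.single i 1 : Fin n → D) ≠ 0 := by
      intro i h0
      have := congrFun h0 i
      simp [Pi.single_eq_same] at this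
    -- rsmul of basis vector
    have hrs : ∀ (i : Fin n) (d : D), rsmul (Pi.single i 1) d = Pi.single i d := by
      intro i d
      funext j
      simp [rsmul, Pi.single_apply, ite_mul]
    -- key scaling relation
    have hkey : ∀ (i : Fin n) (d : D), q (Pi.single i d) - θ d * a i * d ∈ AltSet θ := by
      intro i d
      have := hscale (Pi.single i 1) d
      rwa [hrs] at this
    -- the entries are symmetric
    have hsym : ∀ i : Fin n, θ (a i) = a i := by
      intro i
      have hS : ∀ d d' : D, θ d * a i * d' + θ d' * a i * d ∈ AltSet θ := by
        intro d d'
        have hA := hkey i (d + d')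
        have hB := hkey i d
        have hC := hkey i d'
        have hP : q (Pi.single i (d + d')) - q (Pi.single i d) - q (Pi.single i d')
            ∈ AltSet θ := by
          have := hpolar (Pi.single i d) (Pi.single i d')
          rwa [← Pi.single_add] at this
        have hmem := aux_alt_add θadd (aux_alt_add θadd
          (aux_alt_sub θadd θinv hP hA) hB) hC
        have heq : q (Pi.single i (d + d')) - q (Pi.single i d) - q (Pi.single i d') -
            (q (Pi.single i (d + d')) - θ (d + d') * a i * (d + d')) +
            (q (Pi.single i d) - θ d * a i * d) +
            (q (Pi.single i d') - θ d' * a i * d') =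
            θ d * a i * d' + θ d' * a i * d := by
          rw [θadd]
          noncomm_ring
        rwa [heq] at hmem
      have hS1 : ∀ d' : D, a i * d' + θ d' * a i ∈ AltSet θ := by
        intro d'
        have := hS 1 d'
        rwa [θone, one_mul, mul_one] at this
      have hT : ∀ d' : D, θ (a i) * d' - θ d' * a i ∈ AltSet θ := by
        intro d'
        exact ⟨θ (a i) * d', by rw [θmul, θinv]⟩
      have hb : ∀ d' : D, (a i + θ (a i)) * d' ∈ AltSet θ := by
        intro d'
        have := aux_alt_add θadd (hS1 d') (hT d')
        have heq : a i * d' + θ d' * a i + (θ (a i) * d' - θ d' * a i) =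
            (a i + θ (a i)) * d' := by noncomm_ring
        rwa [heq] at this
      by_cases hz : a i + θ (a i) = 0
      · have h2 : θ (a i) = -(a i) := eq_neg_of_add_eq_zero_right hz
        rw [h2, CharTwo.neg_eq]
      · exfalso
        have hall : q (Pi.single i 1) ∈ AltSet θ := by
          have := hb ((a i + θ (a i))⁻¹ * q (Pi.single i 1))
          rwa [← mul_assoc, mul_inv_cancel₀ hz, one_mul] at this
        exact hqa _ (hene i) hall
    -- the value identity
    have hval : ∀ x : Fin n → D, diagHerm θ a x x - q x ∈ AltSet θ := by
      intro x
      have hgen : ∀ s : Finset (Fin n),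
          q (∑ i ∈ s, Pi.single i (x i)) - ∑ i ∈ s, θ (x i) * a i * x i ∈ AltSet θ := by
        intro s
        induction s using Finset.cons_induction with
        | empty =>
          simp only [Finset.sum_empty, sub_zero]
          have h0 := hscale 0 0
          have hr : rsmul (0 : Fin n → D) 0 = 0 := by funext j; simp [rsmul]
          rw [hr, mul_zero] at h0
          simpa using h0
        | cons j s hj ih =>
          rw [Finset.sum_cons, Finset.sum_cons]
          have hP := hpolar (Pi.single j (x j)) (∑ i ∈ s, Pi.single i (x i))
          have hK := hkey j (x j)
          have hmem := aux_alt_add θadd (aux_alt_add θadd hP hK) ih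
          have heq : q (Pi.single j (x j) + ∑ i ∈ s, Pi.single i (x i)) -
              q (Pi.single j (x j)) - q (∑ i ∈ s, Pi.single i (x i)) +
              (q (Pi.single j (x j)) - θ (x j) * a j * x j) +
              (q (∑ i ∈ s, Pi.single i (x i)) - ∑ i ∈ s, θ (x i) * a i * x i) =
              q (Pi.single j (x j) + ∑ i ∈ s, Pi.single i (x i)) -
              (θ (x j) * a j * x j + ∑ i ∈ s, θ (x i) * a i * x i) := by abel
          rwa [heq] at hmem
      have hu := hgen Finset.univ
      rw [Finset.univ_sum_single] at hu
      have heq2 : diagHerm θ a x x - q x =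
          -(q x - ∑ i, θ (x i) * a i * x i) := by
        rw [diagHerm]; abel
      rw [heq2]
      exact aux_alt_neg θinv hu
    -- the hermitian form
    refine ⟨diagHerm θ a, ⟨?_, ?_, ?_, ?_⟩, ?_, hval⟩
    · intro x x' y
      simp [diagHerm, θadd, add_mul, Finset.sum_add_distrib]
    · intro x y y'
      simp [diagHerm, mul_add, Finset.sum_add_distrib]
    · intro x y d₁ d₂
      simp only [diagHerm, rsmul, θmul, Finset.mul_sum, Finset.sum_mul]
      refine Finset.sum_congr rfl fun i _ => by noncomm_ring
    · intro x y
      rw [diagHerm, diagHerm, aux_theta_sum θadd]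
      refine Finset.sum_congr rfl fun i _ => ?_
      rw [θmul, θmul, θinv, hsym, mul_assoc]
    · intro x hx hmem
      have hqm : q x ∈ AltSet θ := by
        have hm := aux_alt_sub θadd θinv hmem (hval x)
        have heq : diagHerm θ a x x - (diagHerm θ a x x - q x) = q x := by abel
        rwa [heq] at hm
      exact hqa x hx hqm

end GenQuadForm
end

section
/- Let F be a field of characteristic 2, (D,θ) an F-division algebra with involution, and ρ a quadratic form over (D,θ) with polar form ψ. Then ψ is anisotropic if and only if ρ does not represent any element of Sym(D,θ). In particular, if ψ is anisotropic then ρ is nonsingular and anisotropic. -/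
noncomputable section GenQuadForm

open scoped TensorProduct

/-- Let `ρ = (V,q)` be a quadratic form over `(D,θ)` with polar form
`ψ = (V,h)`. Then `ψ` is anisotropic iff `ρ` represents no element of `Sym(D,θ)`;
in particular if `ψ` is anisotropic then `ρ` is nonsingular and anisotropic. -/
theorem stmt2 {F D : Type*} [Field F] [CharP F 2] [DivisionRing D] [Algebra F D]
    [FiniteDimensional F D] [Algebra.IsCentral F D]
    (θ : D → D) (hθ : IsFInvolution F θ)
    (n : ℕ) (q : (Fin n → D) → D) (h : (Fin n → D) → (Fin n → D) → D)
    (hq : IsQuadForm θ n q h) :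
    (HermAnisotropic n h ↔ ∀ a ∈ SymSet θ, ¬ QuadRepresents θ n q a) ∧
    (HermAnisotropic n h → HermNondegenerate n h ∧ QuadAnisotropic θ n q) := by
  obtain ⟨hherm, hqd, hqp⟩ := hq
  obtain ⟨hL, hR, hses, hsym⟩ := hherm
  obtain ⟨hadd, hsmul, hmul, hinv⟩ := hθ
  haveI : CharP D 2 := charP_of_injective_algebraMap (algebraMap F D).injective 2
  -- basic facts about θ
  have θ0 : θ 0 = 0 := by
    have h00 := hadd 0 0
    rw [zero_add] at h00
    exact left_eq_add.mp h00
  have θneg : ∀ a : D, θ (-a) = -θ a := by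
    intro a
    have h1 := hadd a (-a)
    rw [add_neg_cancel, θ0] at h1
    exact eq_neg_of_add_eq_zero_right h1.symm
  have θsub : ∀ a b : D, θ (a - b) = θ a - θ b := by
    intro a b
    rw [sub_eq_add_neg, hadd, θneg, sub_eq_add_neg]
  have θ1 : θ 1 = 1 := by
    have h11 := hmul 1 1
    rw [mul_one] at h11
    have hne : θ 1 ≠ 0 := by
      intro hc
      have h2 := hinv 1
      rw [hc, θ0] at h2
      exact one_ne_zero h2.symm
    exact mul_left_cancel₀ hne (h11.symm.trans (mul_one (θ 1)).symm)
  -- AltSet facts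
  have alt_add : ∀ {a b : D}, a ∈ AltSet θ → b ∈ AltSet θ → a + b ∈ AltSet θ := by
    rintro a b ⟨u, rfl⟩ ⟨v, rfl⟩
    exact ⟨u + v, by rw [hadd]; abel⟩
  have alt_sub : ∀ {a b : D}, a ∈ AltSet θ → b ∈ AltSet θ → a - b ∈ AltSet θ := by
    rintro a b ⟨u, rfl⟩ ⟨v, rfl⟩
    exact ⟨u - v, by rw [θsub]; abel⟩
  have alt_sym : ∀ a : D, a ∈ AltSet θ → θ a = a := by
    rintro a ⟨b, rfl⟩
    rw [θsub, hinv, CharTwo.sub_eq_add, CharTwo.sub_eq_add, add_comm]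
  -- if a nonzero m intertwines θ with the identity, then θ is the identity
  have θ_eq_id : ∀ m : D, m ≠ 0 → (∀ d : D, θ d * m = m * d) → ∀ d : D, θ d = d := by
    intro m hm0 hEm
    have comm : ∀ a b : D, a * b = b * a := by
      intro a b
      have e1 : θ b * θ a * m = m * (b * a) := by
        rw [mul_assoc, hEm a, ← mul_assoc, hEm b, mul_assoc]
      have e2 : θ b * θ a * m = m * (a * b) := by rw [← hmul, hEm]
      exact mul_left_cancel₀ hm0 (e2.symm.trans e1)
    intro d
    have h1 := hEm d
    rw [comm m d] at h1
    exact mul_right_cancel₀ hm0 h1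
  -- key: h x x = q x + θ (q x) for all x
  have key : ∀ x : Fin n → D, h x x + q x + θ (q x) = 0 := by
    intro x
    have hq0 : q 0 ∈ AltSet θ := by
      have h0 := hqd x 0
      have hr0 : rsmul x 0 = 0 := funext fun i => mul_zero _
      rw [hr0, θ0] at h0
      simpa using h0
    have hxx_alt : h x x ∈ AltSet θ := by
      have h3 := hqp x x
      have hx2 : x + x = 0 := funext fun i => CharTwo.add_self_eq_zero _
      rw [hx2] at h3
      have hqq : q 0 - q x - q x - h x x = q 0 - h x x := by
        rw [sub_sub (q 0) (q x) (q x), CharTwo.add_self_eq_zero, sub_zero]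
      rw [hqq] at h3
      have h4 := alt_sub hq0 h3
      have h5 : q 0 - (q 0 - h x x) = h x x := by abel
      rwa [h5] at h4
    have hθe : θ (h x x) = h x x := (hsym x x).symm
    have tmem : ∀ d : D, q x * d + θ d * q x - h x x * d ∈ AltSet θ := by
      intro d
      have hC := hqp x (rsmul x d)
      have hxd : x + rsmul x d = rsmul x (1 + d) := by
        funext i
        show x i + x i * d = x i * (1 + d)
        rw [mul_add, mul_one]
      have hhd : h x (rsmul x d) = h x x * d := by
        have h6 := hses x x 1 d
        rw [show rsmul x 1 = x from funext fun i => mul_one _] at h6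
        rw [h6, θ1, one_mul]
      rw [hxd, hhd] at hC
      have hA := hqd x (1 + d)
      have hB := hqd x d
      have hmem := alt_add (alt_sub hC hA) hB
      have hrw : q (rsmul x (1 + d)) - q x - q (rsmul x d) - h x x * d -
          (q (rsmul x (1 + d)) - θ (1 + d) * q x * (1 + d)) +
          (q (rsmul x d) - θ d * q x * d) =
          q x * d + θ d * q x - h x x * d := by
        rw [hadd, θ1]
        noncomm_ring
      rwa [hrw] at hmem
    have hE : ∀ d : D, θ d * (h x x + q x + θ (q x)) = (h x x + q x + θ (q x)) * d := by
      intro d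
      have hts := alt_sym _ (tmem d)
      rw [θsub, hadd, hmul, hmul, hmul, hinv, hθe] at hts
      have h20 : (2 : D) = 0 := by
        have := CharP.cast_eq_zero D 2
        exact_mod_cast this
      have hid : θ d * (h x x + q x + θ (q x)) - (h x x + q x + θ (q x)) * d =
          -((θ d * θ (q x) + θ (q x) * d - θ d * h x x) -
            (q x * d + θ d * q x - h x x * d)) + 2 * (θ d * θ (q x) - q x * d) := by
        noncomm_ring
      rw [hts, sub_self, neg_zero, zero_add, h20, zero_mul] at hid
      exact sub_eq_zero.mp hid
    by_contra hm0
    have θid := θ_eq_id _ hm0 hE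
    obtain ⟨b, hb⟩ := hxx_alt
    rw [θid, sub_self] at hb
    apply hm0
    rw [hb, θid, zero_add, CharTwo.add_self_eq_zero]
  have symm_of_hxx : ∀ x : Fin n → D, h x x = 0 → θ (q x) = q x := by
    intro x hx
    have hk := key x
    rw [hx, zero_add] at hk
    have hk2 := eq_neg_of_add_eq_zero_right hk
    rwa [CharTwo.neg_eq] at hk2
  have hxx_of_symm : ∀ x : Fin n → D, θ (q x) = q x → h x x = 0 := by
    intro x hs
    have hk := key x
    rwa [hs, add_assoc, CharTwo.add_self_eq_zero, add_zero] at hk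
  constructor
  · constructor
    · intro han a ha hrep
      obtain ⟨x, hx0, hxa⟩ := hrep
      have ha' : θ a = a := ha
      have h1 := alt_sym _ hxa
      rw [θsub, ha'] at h1
      have hsymq : θ (q x) = q x := sub_left_inj.mp h1
      exact hx0 (han x (hxx_of_symm x hsymq))
    · intro hrep x hx
      by_contra hx0
      have hsymq := symm_of_hxx x hx
      exact hrep (q x) hsymq ⟨x, hx0, ⟨0, by rw [θ0, sub_self, sub_zero]⟩⟩
  · intro han
    constructor
    · intro x hx
      exact han x (hx x)
    · intro x hx0 hqx
      exact hx0 (han x (hxx_of_symm x (alt_sym _ hqx)))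

end GenQuadForm
end

section
/- Let F be a field of characteristic 2 and D a finite-dimensional central division algebra over F carrying an F-linear involution. Then u⁺(D) = u⁺_d(D) + u⁻(D), where the sum is understood in ℕ ∪ {∞}. -/
noncomputable section GenQuadForm

open scoped TensorProduct

/-!
In characteristic `2` the vectors `x` with `h x x ∈ Alt(D,θ)` form a subspace `W`, because
`h (x + y) (x + y) - h x x - h y y = c + θ c = c - θ c` with `c = h x y`. For an anisotropic `h`,
the restriction to `W` is anisotropic and alternating, and the restriction to a complement of `W`
is direct; this gives `u⁺ ≤ u⁺_d + u⁻`. Conversely, if `g` is direct and `f` is anisotropic and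
alternating, then `g x x + f y y = 0` forces `g x x ∈ Alt(D,θ)`, hence `x = 0` and then `y = 0`,
so `g ⊥ f` is anisotropic.

Right vector spaces over `D` are modelled as left `Dᵐᵒᵖ`-modules, so that `rsmul x d = op d • x`.
-/

open MulOpposite Module

section Involution

variable {F D : Type*} [Field F] [DivisionRing D] [Algebra F D] {θ : D → D}

theorem IsFInvolution.map_zero (hθ : IsFInvolution F θ) : θ 0 = 0 := by
  simpa using hθ.1 0 0

theorem zero_mem_altSet (hθ : IsFInvolution F θ) : (0 : D) ∈ AltSet θ :=
  ⟨0, by rw [hθ.map_zero, sub_zero]⟩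

theorem add_mem_altSet (hθ : IsFInvolution F θ) {a b : D} (ha : a ∈ AltSet θ)
    (hb : b ∈ AltSet θ) : a + b ∈ AltSet θ := by
  obtain ⟨x, rfl⟩ := ha
  obtain ⟨y, rfl⟩ := hb
  exact ⟨x + y, by rw [hθ.1]; abel⟩

theorem neg_mem_altSet (hθ : IsFInvolution F θ) {a : D} (ha : a ∈ AltSet θ) :
    -a ∈ AltSet θ := by
  obtain ⟨x, rfl⟩ := ha
  exact ⟨θ x, by rw [hθ.2.2.2, neg_sub]⟩

theorem conj_mem_altSet (hθ : IsFInvolution F θ) {a : D} (ha : a ∈ AltSet θ) (d : D) :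
    θ d * a * d ∈ AltSet θ := by
  obtain ⟨x, rfl⟩ := ha
  refine ⟨θ d * x * d, ?_⟩
  rw [hθ.2.2.1, hθ.2.2.1, hθ.2.2.2, mul_sub, sub_mul, mul_assoc, mul_assoc]

theorem add_apply_mem_altSet [CharP D 2] (θ : D → D) (c : D) : c + θ c ∈ AltSet θ :=
  ⟨c, (CharTwo.sub_eq_add c (θ c)).symm⟩

end Involution

section HermForm

variable {F D : Type*} [Field F] [DivisionRing D] [Algebra F D] {θ : D → D}
  {n p : ℕ} {h g : (Fin n → D) → (Fin n → D) → D}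

theorem rsmul_eq_op_smul (x : Fin n → D) (d : D) : rsmul x d = op d • x := rfl

theorem IsHermForm.map_zero_left (hh : IsHermForm θ n h) (y : Fin n → D) : h 0 y = 0 := by
  simpa using hh.1 0 0 y

theorem IsHermForm.apply_add_add (hh : IsHermForm θ n h) (x y : Fin n → D) :
    h (x + y) (x + y) = h x x + h y y + (h x y + θ (h x y)) := by
  rw [hh.1, hh.2.1, hh.2.1, hh.2.2.2 x y]
  abel

theorem IsHermForm.comp (hh : IsHermForm θ n h) (φ : (Fin p → D) →ₗ[Dᵐᵒᵖ] (Fin n → D)) :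
    IsHermForm θ p (fun x y => h (φ x) (φ y)) := by
  refine ⟨fun x x' y => ?_, fun x y y' => ?_, fun x y d₁ d₂ => ?_, fun x y => hh.2.2.2 _ _⟩ <;>
    dsimp only
  · rw [map_add, hh.1]
  · rw [map_add, hh.2.1]
  · simp only [rsmul_eq_op_smul, map_smul]
    exact hh.2.2.1 _ _ _ _

theorem IsHermForm.add (hθ : IsFInvolution F θ) (hh : IsHermForm θ n h) (hg : IsHermForm θ n g) :
    IsHermForm θ n (fun x y => h x y + g x y) := by
  refine ⟨fun x x' y => ?_, fun x y y' => ?_, fun x y d₁ d₂ => ?_, fun x y => ?_⟩ <;>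
    dsimp only
  · rw [hh.1, hg.1]; abel
  · rw [hh.2.1, hg.2.1]; abel
  · rw [hh.2.2.1, hg.2.2.1, mul_add, add_mul]
  · rw [hh.2.2.2, hg.2.2.2, hθ.1]

theorem isHermForm_zero (hθ : IsFInvolution F θ) : IsHermForm θ n (fun _ _ => 0) :=
  ⟨fun _ _ _ => (add_zero 0).symm, fun _ _ _ => (add_zero 0).symm,
    fun _ _ _ _ => by rw [mul_zero, zero_mul], fun _ _ => hθ.map_zero.symm⟩

theorem HermAnisotropic.comp (han : HermAnisotropic n h)
    {φ : (Fin p → D) →ₗ[Dᵐᵒᵖ] (Fin n → D)} (hφ : Function.Injective φ) :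
    HermAnisotropic p (fun x y => h (φ x) (φ y)) :=
  fun x hx => hφ <| by rw [han _ hx, map_zero]

def IsHermForm.altSubmodule [CharP D 2] (hθ : IsFInvolution F θ) (hh : IsHermForm θ n h) :
    Submodule Dᵐᵒᵖ (Fin n → D) where
  carrier := {x | h x x ∈ AltSet θ}
  zero_mem' := by
    simpa only [Set.mem_ofPred_eq, hh.map_zero_left] using zero_mem_altSet hθ
  add_mem' {x y} hx hy := by
    simp only [Set.mem_ofPred_eq, hh.apply_add_add]
    exact add_mem_altSet hθ (add_mem_altSet hθ hx hy) (add_apply_mem_altSet θ _)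
  smul_mem' d x hx := by
    change h (rsmul x d.unop) (rsmul x d.unop) ∈ AltSet θ
    rw [hh.2.2.1]
    exact conj_mem_altSet hθ hx _

end HermForm

section RightVectorSpace

variable {D : Type*} [DivisionRing D] {n : ℕ}

def finFunOpLinearEquiv (n : ℕ) : (Fin n → D) ≃ₗ[Dᵐᵒᵖ] (Fin n → Dᵐᵒᵖ) :=
  LinearEquiv.piCongrRight fun _ => opLinearEquiv Dᵐᵒᵖ

instance : FiniteDimensional Dᵐᵒᵖ (Fin n → D) :=
  Module.Finite.equiv (finFunOpLinearEquiv n).symm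

theorem finrank_fin_fun_op : finrank Dᵐᵒᵖ (Fin n → D) = n := by
  rw [(finFunOpLinearEquiv n).finrank_eq, finrank_fin_fun]

def finFunLinearEquiv (V : Type*) [AddCommGroup V] [Module Dᵐᵒᵖ V] [FiniteDimensional Dᵐᵒᵖ V] :
    (Fin (finrank Dᵐᵒᵖ V) → D) ≃ₗ[Dᵐᵒᵖ] V :=
  (finFunOpLinearEquiv _).trans (finBasis Dᵐᵒᵖ V).equivFun.symm

end RightVectorSpace

section Decomposition

variable {F D : Type*} [Field F] [DivisionRing D] [Algebra F D] {θ : D → D}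

theorem exists_direct_add_anisotropic_alternating [CharP F 2] (hθ : IsFInvolution F θ) {n : ℕ}
    {h : (Fin n → D) → (Fin n → D) → D} (hh : IsHermForm θ n h) (han : HermAnisotropic n h) :
    ∃ k m, k + m = n ∧ (∃ g, IsHermForm θ k g ∧ HermDirect θ k g) ∧
      ∃ f, IsHermForm θ m f ∧ HermAnisotropic m f ∧ HermAlternating θ m f := by
  have : CharP D 2 := charP_of_injective_algebraMap (algebraMap F D).injective 2
  set W := hh.altSubmodule hθ
  obtain ⟨U, hWU⟩ := W.exists_isCompl
  set φW := W.subtype ∘ₗ (finFunLinearEquiv W).toLinearMap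
  set φU := U.subtype ∘ₗ (finFunLinearEquiv U).toLinearMap
  have hφW : Function.Injective φW := W.injective_subtype.comp (LinearEquiv.injective _)
  have hφU : Function.Injective φU := U.injective_subtype.comp (LinearEquiv.injective _)
  have hdirect : HermDirect θ _ fun x y => h (φU x) (φU y) := by
    intro x hx hxW
    have hxWU : φU x ∈ W ⊓ U := ⟨hxW, (finFunLinearEquiv U x).2⟩
    rw [hWU.inf_eq_bot, Submodule.mem_bot, ← map_zero φU] at hxWU
    exact hx (hφU hxWU)
  refine ⟨finrank Dᵐᵒᵖ U, finrank Dᵐᵒᵖ W, ?_, ⟨_, hh.comp φU, hdirect⟩,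
    _, hh.comp φW, han.comp hφW, fun x => (finFunLinearEquiv W x).2⟩
  rw [add_comm, Submodule.finrank_add_eq_of_isCompl hWU, finrank_fin_fun_op]

theorem exists_anisotropic_of_direct_of_alternating (hθ : IsFInvolution F θ) {k m : ℕ}
    {g : (Fin k → D) → (Fin k → D) → D} (hg : IsHermForm θ k g) (hgd : HermDirect θ k g)
    {f : (Fin m → D) → (Fin m → D) → D} (hf : IsHermForm θ m f)
    (hfa : HermAnisotropic m f) (hfalt : HermAlternating θ m f) :
    ∃ H, IsHermForm θ (k + m) H ∧ HermAnisotropic (k + m) H := by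
  set L := LinearMap.funLeft Dᵐᵒᵖ D (Fin.castAdd m : Fin k → Fin (k + m))
  set R := LinearMap.funLeft Dᵐᵒᵖ D (Fin.natAdd k : Fin m → Fin (k + m))
  refine ⟨_, (hg.comp L).add hθ (hf.comp R), fun x hx => ?_⟩
  have hLx : L x = 0 := by
    by_contra hne
    exact hgd _ hne (eq_neg_of_add_eq_zero_left hx ▸ neg_mem_altSet hθ (hfalt (R x)))
  have hRx : R x = 0 := hfa _ (by rwa [hLx, hg.map_zero_left, zero_add] at hx)
  funext i
  exact Fin.addCases (congrFun hLx) (congrFun hRx) i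

end Decomposition

theorem stmt3_general {F D : Type*} [Field F] [CharP F 2] [DivisionRing D] [Algebra F D]
    (θ : D → D) (hθ : IsFInvolution F θ) :
    uHermPlus θ = uHermPlusDirect θ + uHermMinus θ := by
  refine le_antisymm (iSup₂_le fun n ⟨h, hh, han⟩ => ?_) ?_
  · obtain ⟨k, m, rfl, hk, hm⟩ := exists_direct_add_anisotropic_alternating hθ hh han
    exact (Nat.cast_add (R := ℕ∞) k m).symm ▸ add_le_add (le_biSup _ hk) (le_biSup _ hm)
  · refine ENat.biSup_add_biSup_le ?_ ?_ fun k ⟨g, hg, hgd⟩ m ⟨f, hf, hfa, hfalt⟩ => ?_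
    · exact ⟨0, _, isHermForm_zero hθ, fun x hx => (hx (Subsingleton.elim x 0)).elim⟩
    · exact ⟨0, _, isHermForm_zero hθ, fun x _ => Subsingleton.elim x 0,
        fun _ => zero_mem_altSet hθ⟩
    exact (Nat.cast_add (R := ℕ∞) k m).symm ▸ le_biSup _
      (exists_anisotropic_of_direct_of_alternating hθ hg hgd hf hfa hfalt)

/-- `u⁺(D) = u⁺_d(D) + u⁻(D)` in `ℕ ∪ {∞}`. -/
theorem stmt3 {F D : Type*} [Field F] [CharP F 2] [DivisionRing D] [Algebra F D]
    [FiniteDimensional F D] [Algebra.IsCentral F D]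
    (θ : D → D) (hθ : IsFInvolution F θ) :
    uHermPlus θ = uHermPlusDirect θ + uHermMinus θ :=
  stmt3_general θ hθ

end GenQuadForm
end

section
/- Let F be a field of characteristic 2 and D a finite-dimensional central division algebra over F carrying an F-linear involution. Then u⁻(D) ≤ ũ(D): for every anisotropic alternating hermitian form ψ over (D,θ) there exists an anisotropic nonsingular quadratic form over (D,θ) of the same dimension (having ψ as its polar form). -/
noncomputable section GenQuadForm

open scoped TensorProduct

/-! Split the Gram matrix of `h` as `H = C + θ(C)ᵀ` with `C` upper triangular; this needs the
diagonal entries of `H` to lie in `Alt(D,θ)` (in characteristic `2`, `b - θ b = b + θ b`), which is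
where alternation is used. Then `q x = ∑ θ(xᵢ) Cᵢⱼ xⱼ` is a quadratic form with polar form `h`,
and `h x x = q x + θ (q x)`. In characteristic `2` alternating elements are symmetric, so
`q x ∈ Alt(D,θ)` forces `h x x = q x + q x = 0`. -/

open scoped Matrix

structure IsAntiInvolution {D : Type*} [Ring D] (θ : D → D) : Prop where
  map_add : ∀ a b : D, θ (a + b) = θ a + θ b
  map_mul : ∀ a b : D, θ (a * b) = θ b * θ a
  involutive : ∀ a : D, θ (θ a) = a

theorem IsFInvolution.isAntiInvolution {F D : Type*} [Field F] [Ring D] [Algebra F D]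
    {θ : D → D} (hθ : IsFInvolution F θ) : IsAntiInvolution θ :=
  ⟨hθ.1, hθ.2.2.1, hθ.2.2.2⟩

namespace IsAntiInvolution

variable {D : Type*} [Ring D] {θ : D → D}

def toAddMonoidHom (hθ : IsAntiInvolution θ) : D →+ D := AddMonoidHom.mk' θ hθ.map_add

theorem map_zero (hθ : IsAntiInvolution θ) : θ 0 = 0 := hθ.toAddMonoidHom.map_zero

theorem map_sub (hθ : IsAntiInvolution θ) (a b : D) : θ (a - b) = θ a - θ b :=
  hθ.toAddMonoidHom.map_sub a b

theorem map_sum (hθ : IsAntiInvolution θ) {ι : Type*} (s : Finset ι) (f : ι → D) :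
    θ (∑ i ∈ s, f i) = ∑ i ∈ s, θ (f i) :=
  _root_.map_sum hθ.toAddMonoidHom f s

theorem mem_symSet_of_mem_altSet [CharP D 2] (hθ : IsAntiInvolution θ) {a : D}
    (ha : a ∈ AltSet θ) : a ∈ SymSet θ := by
  obtain ⟨b, rfl⟩ := ha
  show θ (b - θ b) = b - θ b
  rw [hθ.map_sub, hθ.involutive, CharTwo.sub_eq_add, CharTwo.sub_eq_add, add_comm]

end IsAntiInvolution

section MatrixForm

variable {D : Type*} [Ring D] {n : ℕ}

def sesqForm (θ : D → D) (C : Matrix (Fin n) (Fin n) D) (x y : Fin n → D) : D :=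
  ∑ i, ∑ j, θ (x i) * C i j * y j

def gramMatrix (h : (Fin n → D) → (Fin n → D) → D) : Matrix (Fin n) (Fin n) D :=
  Matrix.of fun i j => h (Pi.single i 1) (Pi.single j 1)

variable {θ : D → D}

theorem rsmul_single (i : Fin n) (d : D) : rsmul (Pi.single i 1) d = Pi.single i d := by
  funext j
  simp [rsmul, Pi.single_apply, ite_mul]

theorem eq_sum_rsmul_single (x : Fin n → D) : x = ∑ i, rsmul (Pi.single i 1) (x i) := by
  simp only [rsmul_single, Finset.univ_sum_single]

theorem IsHermForm.map_sum_left {h : (Fin n → D) → (Fin n → D) → D} (hh : IsHermForm θ n h)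
    {ι : Type*} (s : Finset ι) (f : ι → Fin n → D) (y : Fin n → D) :
    h (∑ i ∈ s, f i) y = ∑ i ∈ s, h (f i) y :=
  map_sum (AddMonoidHom.mk' (h · y) fun a b => hh.1 a b y) f s

theorem IsHermForm.map_sum_right {h : (Fin n → D) → (Fin n → D) → D} (hh : IsHermForm θ n h)
    {ι : Type*} (s : Finset ι) (x : Fin n → D) (f : ι → Fin n → D) :
    h x (∑ i ∈ s, f i) = ∑ i ∈ s, h x (f i) :=
  map_sum (AddMonoidHom.mk' (h x) (hh.2.1 x)) f s

theorem IsHermForm.eq_sesqForm_gramMatrix {h : (Fin n → D) → (Fin n → D) → D}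
    (hh : IsHermForm θ n h) (x y : Fin n → D) : h x y = sesqForm θ (gramMatrix h) x y := by
  conv_lhs => rw [eq_sum_rsmul_single x, eq_sum_rsmul_single y]
  simp only [hh.map_sum_left, hh.map_sum_right, hh.2.2.1]
  rfl

theorem sesqForm_add_left (hθ : IsAntiInvolution θ) (C : Matrix (Fin n) (Fin n) D)
    (x x' y : Fin n → D) : sesqForm θ C (x + x') y = sesqForm θ C x y + sesqForm θ C x' y := by
  simp only [sesqForm, Pi.add_apply, hθ.map_add, add_mul, Finset.sum_add_distrib]

theorem sesqForm_add_right (C : Matrix (Fin n) (Fin n) D) (x y y' : Fin n → D) :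
    sesqForm θ C x (y + y') = sesqForm θ C x y + sesqForm θ C x y' := by
  simp only [sesqForm, Pi.add_apply, mul_add, Finset.sum_add_distrib]

theorem sesqForm_add_matrix (C C' : Matrix (Fin n) (Fin n) D) (x y : Fin n → D) :
    sesqForm θ (C + C') x y = sesqForm θ C x y + sesqForm θ C' x y := by
  simp only [sesqForm, Matrix.add_apply, mul_add, add_mul, Finset.sum_add_distrib]

theorem sesqForm_rsmul (hθ : IsAntiInvolution θ) (C : Matrix (Fin n) (Fin n) D)
    (x y : Fin n → D) (d₁ d₂ : D) :
    sesqForm θ C (rsmul x d₁) (rsmul y d₂) = θ d₁ * sesqForm θ C x y * d₂ := by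
  simp only [sesqForm, rsmul, hθ.map_mul, Finset.mul_sum, Finset.sum_mul, mul_assoc]

theorem map_sesqForm (hθ : IsAntiInvolution θ) (C : Matrix (Fin n) (Fin n) D)
    (x y : Fin n → D) : θ (sesqForm θ C x y) = sesqForm θ (Cᵀ.map θ) y x := by
  simp only [sesqForm, hθ.map_sum, hθ.map_mul, hθ.involutive, Matrix.map_apply,
    Matrix.transpose_apply, mul_assoc]
  exact Finset.sum_comm

theorem eq_sesqForm_add_map_sesqForm (hθ : IsAntiInvolution θ)
    {h : (Fin n → D) → (Fin n → D) → D} (hh : IsHermForm θ n h)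
    {C : Matrix (Fin n) (Fin n) D} (hC : C + Cᵀ.map θ = gramMatrix h) (x y : Fin n → D) :
    h x y = sesqForm θ C x y + θ (sesqForm θ C y x) := by
  rw [hh.eq_sesqForm_gramMatrix, ← hC, sesqForm_add_matrix, map_sesqForm hθ]

theorem isQuadForm_sesqForm_self (hθ : IsAntiInvolution θ)
    {h : (Fin n → D) → (Fin n → D) → D} (hh : IsHermForm θ n h)
    {C : Matrix (Fin n) (Fin n) D} (hC : C + Cᵀ.map θ = gramMatrix h) :
    IsQuadForm θ n (fun x => sesqForm θ C x x) h := by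
  refine ⟨hh, fun x d => ⟨0, ?_⟩, fun x y => ⟨sesqForm θ C y x, ?_⟩⟩ <;> dsimp only
  · rw [sesqForm_rsmul hθ, sub_self, hθ.map_zero, sub_zero]
  · rw [sesqForm_add_left hθ, sesqForm_add_right, sesqForm_add_right,
      eq_sesqForm_add_map_sesqForm hθ hh hC]
    abel

end MatrixForm

theorem exists_add_transpose_map_eq {ι D : Type*} [LinearOrder ι] [Ring D] [CharP D 2]
    {θ : D → D} (hθ : IsAntiInvolution θ) (H : Matrix ι ι D)
    (hH : ∀ i j, θ (H j i) = H i j) (hdiag : ∀ i, H i i ∈ AltSet θ) :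
    ∃ C : Matrix ι ι D, C + Cᵀ.map θ = H := by
  choose b hb using hdiag
  refine ⟨Matrix.of fun i j => if i < j then H i j else if i = j then b i else 0, ?_⟩
  ext i j
  simp only [Matrix.add_apply, Matrix.transpose_apply, Matrix.map_apply, Matrix.of_apply]
  rcases lt_trichotomy i j with hij | rfl | hij
  · simp [hij, hij.ne', not_lt_of_gt hij, hθ.map_zero]
  · simp [hb, CharTwo.sub_eq_add]
  · simp [hij, hij.ne', not_lt_of_gt hij, hH]

theorem quadAnisotropic_of_self_eq_add_map {D : Type*} [Ring D] [CharP D 2] {θ : D → D}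
    (hθ : IsAntiInvolution θ) {n : ℕ} {q : (Fin n → D) → D}
    {h : (Fin n → D) → (Fin n → D) → D} (hqh : ∀ x, h x x = q x + θ (q x))
    (hani : HermAnisotropic n h) : QuadAnisotropic θ n q := by
  intro x hx hqx
  have hsym : θ (q x) = q x := hθ.mem_symSet_of_mem_altSet hqx
  exact hx (hani x (by rw [hqh, hsym, CharTwo.add_self_eq_zero]))

theorem exists_isQuadForm_quadAnisotropic {D : Type*} [Ring D] [CharP D 2] {θ : D → D}
    (hθ : IsAntiInvolution θ) {n : ℕ} {h : (Fin n → D) → (Fin n → D) → D}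
    (hh : IsHermForm θ n h) (hani : HermAnisotropic n h) (halt : HermAlternating θ n h) :
    ∃ q, IsQuadForm θ n q h ∧ QuadAnisotropic θ n q := by
  obtain ⟨C, hC⟩ := exists_add_transpose_map_eq hθ (gramMatrix h)
    (fun i j => (hh.2.2.2 _ _).symm) (fun i => halt _)
  exact ⟨_, isQuadForm_sesqForm_self hθ hh hC,
    quadAnisotropic_of_self_eq_add_map hθ (fun x => eq_sesqForm_add_map_sesqForm hθ hh hC x x)
      hani⟩

theorem HermAnisotropic.hermNondegenerate {D : Type*} [Ring D] {n : ℕ}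
    {h : (Fin n → D) → (Fin n → D) → D} (hani : HermAnisotropic n h) :
    HermNondegenerate n h :=
  fun x hx => hani x (hx x)

theorem stmt4_general {F D : Type*} [Field F] [CharP F 2] [DivisionRing D] [Algebra F D]
    (θ : D → D) (hθ : IsFInvolution F θ) :
    uHermMinus θ ≤ uQuadTilde θ ∧
    ∀ (n : ℕ) (h : (Fin n → D) → (Fin n → D) → D), IsHermForm θ n h →
      HermAnisotropic n h → HermAlternating θ n h →
      ∃ q : (Fin n → D) → D, IsQuadForm θ n q h ∧ QuadAnisotropic θ n q := by
  have : CharP D 2 := charP_of_injective_algebraMap' F 2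
  have key : ∀ (n : ℕ) (h : (Fin n → D) → (Fin n → D) → D), IsHermForm θ n h →
      HermAnisotropic n h → HermAlternating θ n h →
      ∃ q : (Fin n → D) → D, IsQuadForm θ n q h ∧ QuadAnisotropic θ n q :=
    fun _ _ hh hani halt => exists_isQuadForm_quadAnisotropic hθ.isAntiInvolution hh hani halt
  refine ⟨biSup_mono ?_, key⟩
  rintro n ⟨h, hh, hani, halt⟩
  obtain ⟨q, hq, hqa⟩ := key n h hh hani halt
  exact ⟨q, ⟨h, hq, hani.hermNondegenerate⟩, hqa⟩

/-- `u⁻(D) ≤ ũ(D)`: every anisotropic alternating hermitian form over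
`(D,θ)` is the polar form of an anisotropic (nonsingular) quadratic form of the same
dimension. -/
theorem stmt4 {F D : Type*} [Field F] [CharP F 2] [DivisionRing D] [Algebra F D]
    [FiniteDimensional F D] [Algebra.IsCentral F D]
    (θ : D → D) (hθ : IsFInvolution F θ) :
    uHermMinus θ ≤ uQuadTilde θ ∧
    ∀ (n : ℕ) (h : (Fin n → D) → (Fin n → D) → D), IsHermForm θ n h →
      HermAnisotropic n h → HermAlternating θ n h →
      ∃ q : (Fin n → D) → D, IsQuadForm θ n q h ∧ QuadAnisotropic θ n q :=
  stmt4_general θ hθ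

end GenQuadForm
end

section
/- Let F be a field of characteristic 2 and D a finite-dimensional central division algebra over F carrying an F-linear involution, with D not a field. Then u(D) ≤ u⁺(D) + u⁺_d(D) (equivalently, u(D) ≤ u⁻(D) + 2·u⁺_d(D)). -/
noncomputable section GenQuadForm

open scoped TensorProduct

namespace Stmt6Aux
set_option linter.unusedSectionVars false

variable {D : Type*} [DivisionRing D] {θ : D → D}

/-- The hypotheses on `θ` and `D` we actually use. -/
structure Good (θ : D → D) : Prop where
  addm : ∀ a b : D, θ (a + b) = θ a + θ b
  mulm : ∀ a b : D, θ (a * b) = θ b * θ a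
  invol : ∀ a : D, θ (θ a) = a
  char2 : ∀ a : D, a + a = 0
  nalt : ∃ z : D, z ∉ AltSet θ

namespace Good

variable (hg : Good θ)
include hg

lemma neg_eq (a : D) : -a = a := neg_eq_of_add_eq_zero_left (hg.char2 a)

lemma sub_eq (a b : D) : a - b = a + b := by rw [sub_eq_add_neg, hg.neg_eq]

lemma theta_zero : θ 0 = 0 := by
  have h := hg.addm 0 0
  simp only [add_zero] at h
  exact (left_eq_add.mp h)

lemma theta_one : θ 1 = 1 := by
  have h1 : θ 1 * 1 = θ 1 * θ 1 := by
    rw [mul_one]; simpa using hg.mulm 1 1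
  rcases eq_or_ne (θ 1) 0 with h | h
  · exfalso
    have h2 := hg.invol 1
    rw [h, hg.theta_zero] at h2
    exact one_ne_zero h2.symm
  · exact (mul_left_cancel₀ h h1).symm

lemma theta_neg (a : D) : θ (-a) = - θ a := by
  rw [hg.neg_eq, hg.neg_eq]

lemma theta_sub (a b : D) : θ (a - b) = θ a - θ b := by
  rw [hg.sub_eq, hg.sub_eq, hg.addm]

-- AltSet lemmas
lemma alt_zero : (0 : D) ∈ AltSet θ := ⟨0, by rw [hg.theta_zero, sub_zero]⟩

lemma alt_add {a b : D} (ha : a ∈ AltSet θ) (hb : b ∈ AltSet θ) : a + b ∈ AltSet θ := by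
  obtain ⟨c, rfl⟩ := ha; obtain ⟨d, rfl⟩ := hb
  exact ⟨c + d, by rw [hg.addm]; abel⟩

lemma alt_neg {a : D} (ha : a ∈ AltSet θ) : -a ∈ AltSet θ := by rwa [hg.neg_eq]

lemma alt_sub {a b : D} (ha : a ∈ AltSet θ) (hb : b ∈ AltSet θ) : a - b ∈ AltSet θ := by
  rw [hg.sub_eq]; exact hg.alt_add ha hb

lemma alt_of_sub_mem {a b : D} (ha : a ∈ AltSet θ) (hab : a - b ∈ AltSet θ) : b ∈ AltSet θ := by
  have := hg.alt_sub ha hab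
  simpa using this

lemma theta_alt {a : D} (ha : a ∈ AltSet θ) : θ a = a := by
  obtain ⟨b, rfl⟩ := ha
  rw [hg.theta_sub, hg.invol, hg.sub_eq, hg.sub_eq, add_comm]

lemma self_add_theta_alt (a : D) : a + θ a ∈ AltSet θ := ⟨a, by rw [hg.sub_eq]⟩

lemma self_sub_theta_alt (a : D) : a - θ a ∈ AltSet θ := ⟨a, rfl⟩

lemma alt_conj {a : D} (ha : a ∈ AltSet θ) (d : D) : θ d * a * d ∈ AltSet θ := by
  obtain ⟨b, rfl⟩ := ha
  refine ⟨θ d * b * d, ?_⟩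
  rw [mul_sub, sub_mul, hg.mulm, hg.mulm, hg.invol, ← mul_assoc]

lemma theta_sum {ι : Type*} (s : Finset ι) (f : ι → D) :
    θ (∑ i ∈ s, f i) = ∑ i ∈ s, θ (f i) := by
  exact map_sum (AddMonoidHom.mk' θ hg.addm) f s

/-- Lemma N : if `a * e + θ e * a ∈ Alt` for all `e`, then `θ a = a`. -/
lemma lemmaN {a : D} (H : ∀ e : D, a * e + θ e * a ∈ AltSet θ) : θ a = a := by
  have key : ∀ e : D, θ e * (a + θ a) ∈ AltSet θ := by
    intro e
    have h1 := H e
    have h2 : a * e + θ e * θ a ∈ AltSet θ := by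
      have h2' := hg.self_add_theta_alt (a * e)
      rwa [hg.mulm] at h2'
    have h3 := hg.alt_add h1 h2
    have heq : a * e + θ e * a + (a * e + θ e * θ a)
        = a * e + a * e + (θ e * a + θ e * θ a) := by abel
    rw [heq, hg.char2 (a * e), zero_add, ← mul_add] at h3
    exact h3
  rcases eq_or_ne (a + θ a) 0 with hw | hw
  · have h' : θ a = -a := eq_neg_of_add_eq_zero_right hw
    rw [h', hg.neg_eq]
  · exfalso
    obtain ⟨z, hz⟩ := hg.nalt
    have := key (θ (z * (a + θ a)⁻¹))
    rw [hg.invol, mul_assoc, inv_mul_cancel₀ hw, mul_one] at this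
    exact hz this

end Good

section Quad

open Good

variable {n : ℕ} {q : (Fin n → D) → D} {h : (Fin n → D) → (Fin n → D) → D}

lemma rsmul_one (x : Fin n → D) : rsmul x 1 = x := funext fun _ => mul_one _
lemma rsmul_zero_left (d : D) : rsmul (0 : Fin n → D) d = 0 := funext fun _ => zero_mul _
lemma rsmul_zero (x : Fin n → D) : rsmul x 0 = 0 := funext fun _ => mul_zero _
lemma rsmul_add_right (x : Fin n → D) (d e : D) :
    rsmul x (d + e) = rsmul x d + rsmul x e := funext fun _ => mul_add _ _ _
lemma op_smul_eq_rsmul (d : D) (x : Fin n → D) :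
    (MulOpposite.op d) • x = rsmul x d := rfl

variable (hg : Good θ) (hq : IsQuadForm θ n q h)

section Herm
variable (hh : IsHermForm θ n h)
include hh

lemma h_zero_left (y : Fin n → D) : h 0 y = 0 := by
  have := hh.1 0 0 y
  simpa using this.symm

lemma h_zero_right (x : Fin n → D) : h x 0 = 0 := by
  have := hh.2.1 x 0 0
  simpa using this.symm

lemma h_sub_right (x z z' : Fin n → D) : h x (z - z') = h x z - h x z' :=
  map_sub (AddMonoidHom.mk' (h x) (fun a b => hh.2.1 x a b)) z z'

lemma h_sum_right {m : ℕ} (x : Fin n → D) (f : Fin m → Fin n → D) :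
    h x (∑ i, f i) = ∑ i, h x (f i) :=
  map_sum (AddMonoidHom.mk' (h x) (fun a b => hh.2.1 x a b)) f Finset.univ

lemma h_sum_left {m : ℕ} (y : Fin n → D) (f : Fin m → Fin n → D) :
    h (∑ i, f i) y = ∑ i, h (f i) y :=
  map_sum (AddMonoidHom.mk' (fun z => h z y) (fun a b => hh.1 a b y)) f Finset.univ

include hg

lemma h_smul_left (x y : Fin n → D) (d : D) : h (rsmul x d) y = θ d * h x y := by
  have := hh.2.2.1 x y d 1
  rwa [rsmul_one, mul_one] at this

lemma h_smul_right (x y : Fin n → D) (d : D) : h x (rsmul y d) = h x y * d := by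
  have := hh.2.2.1 x y 1 d
  rwa [rsmul_one, hg.theta_one, one_mul] at this

end Herm

include hg hq

lemma q_zero_alt : q 0 ∈ AltSet θ := by
  have h0 := hq.2.1 0 0
  rw [rsmul_zero, mul_zero] at h0
  simpa using h0

lemma h_diag_alt (x : Fin n → D) : h x x ∈ AltSet θ := by
  have hp := hq.2.2 x x
  have hx : x + x = 0 := funext fun i => hg.char2 (x i)
  rw [hx, sub_sub (q 0) (q x) (q x), hg.char2 (q x), sub_zero] at hp
  exact hg.alt_of_sub_mem (q_zero_alt hg hq) hp

lemma q_mul_theta_alt (x : Fin n → D) (hxx : h x x = 0) (e : D) :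
    q x * e + θ e * q x ∈ AltSet θ := by
  have A1 := hq.2.2 x (rsmul x e)
  rw [h_smul_right hg hq.1, hxx, zero_mul, sub_zero] at A1
  have A2 := hq.2.1 x e
  have A3 := hq.2.1 x (1 + e)
  rw [rsmul_add_right, rsmul_one, hg.addm, hg.theta_one] at A3
  have hcomb := hg.alt_add (hg.alt_sub A1 A3) A2
  have heq : q (x + rsmul x e) - q x - q (rsmul x e) -
      (q (x + rsmul x e) - (1 + θ e) * q x * (1 + e)) +
      (q (rsmul x e) - θ e * q x * e) = q x * e + θ e * q x := by
    have hx2 : (1 + θ e) * q x * (1 + e) =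
        q x + q x * e + θ e * q x + θ e * q x * e := by noncomm_ring
    rw [hx2]; abel
  rwa [heq] at hcomb

lemma q_theta_eq (x : Fin n → D) (hxx : h x x = 0) : θ (q x) = q x :=
  hg.lemmaN (fun e => q_mul_theta_alt hg hq x hxx e)

lemma q_sum_alt {s : ℕ} (t : Fin s → Fin n → D) (c : Fin s → D)
    (horth : ∀ i j, h (t i) (t j) = 0) :
    q (∑ i, rsmul (t i) (c i)) - ∑ i, θ (c i) * q (t i) * c i ∈ AltSet θ := by
  induction s with
  | zero =>
      simpa using q_zero_alt hg hq
  | succ s IH =>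
      rw [Fin.sum_univ_succ, Fin.sum_univ_succ]
      have A := hq.2.2 (rsmul (t 0) (c 0)) (∑ i : Fin s, rsmul (t i.succ) (c i.succ))
      have hcross : h (rsmul (t 0) (c 0)) (∑ i : Fin s, rsmul (t i.succ) (c i.succ)) = 0 := by
        rw [h_sum_right hq.1]
        refine Finset.sum_eq_zero fun i _ => ?_
        rw [hq.1.2.2.1, horth 0 i.succ, mul_zero, zero_mul]
      rw [hcross, sub_zero] at A
      have B := hq.2.1 (t 0) (c 0)
      have C := IH (fun i => t i.succ) (fun i => c i.succ) (fun i j => horth i.succ j.succ)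
      have hcomb := hg.alt_add (hg.alt_add A B) C
      have heq : q (rsmul (t 0) (c 0) + ∑ i : Fin s, rsmul (t i.succ) (c i.succ)) -
            q (rsmul (t 0) (c 0)) - q (∑ i : Fin s, rsmul (t i.succ) (c i.succ)) +
            (q (rsmul (t 0) (c 0)) - θ (c 0) * q (t 0) * c 0) +
            (q (∑ i : Fin s, rsmul (t i.succ) (c i.succ)) -
              ∑ i : Fin s, θ (c i.succ) * q (t i.succ) * c i.succ) =
          q (rsmul (t 0) (c 0) + ∑ i : Fin s, rsmul (t i.succ) (c i.succ)) -
            (θ (c 0) * q (t 0) * c 0 + ∑ i : Fin s, θ (c i.succ) * q (t i.succ) * c i.succ) := by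
        abel
      rwa [heq] at hcomb

-- the diagonal hermitian form attached to symmetric entries
lemma diagHerm_isHerm {m : ℕ} (sv : Fin m → D) (hsym : ∀ i, θ (sv i) = sv i) :
    IsHermForm θ m (diagHerm θ sv) := by
  refine ⟨?_, ?_, ?_, ?_⟩
  · intro x x' y
    unfold diagHerm
    rw [← Finset.sum_add_distrib]
    refine Finset.sum_congr rfl fun i _ => ?_
    rw [Pi.add_apply, hg.addm, add_mul, add_mul]
  · intro x y y'
    unfold diagHerm
    rw [← Finset.sum_add_distrib]
    refine Finset.sum_congr rfl fun i _ => ?_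
    rw [Pi.add_apply, mul_add]
  · intro x y d₁ d₂
    unfold diagHerm
    rw [Finset.mul_sum, Finset.sum_mul]
    refine Finset.sum_congr rfl fun i _ => ?_
    show θ (x i * d₁) * sv i * (y i * d₂) = θ d₁ * (θ (x i) * sv i * y i) * d₂
    rw [hg.mulm]
    noncomm_ring
  · intro x y
    unfold diagHerm
    rw [hg.theta_sum]
    refine Finset.sum_congr rfl fun i _ => ?_
    show θ (y i) * sv i * x i = θ (θ (x i) * sv i * y i)
    rw [hg.mulm, hg.mulm, hg.invol, hsym i, ← mul_assoc]

include hg hq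

lemma diagHerm_direct (hqa : QuadAnisotropic θ n q) {s : ℕ} (t : Fin s → Fin n → D)
    (horth : ∀ i j, h (t i) (t j) = 0)
    (hind : ∀ c : Fin s → D, (∑ i, rsmul (t i) (c i)) = 0 → c = 0) :
    HermDirect θ s (diagHerm θ (fun i => q (t i))) := by
  intro c hc hmem
  have hmem' : (∑ i, θ (c i) * q (t i) * c i) ∈ AltSet θ := hmem
  have hsum := q_sum_alt hg hq t c horth
  have hqT : q (∑ i, rsmul (t i) (c i)) ∈ AltSet θ := by
    have h2 := hg.alt_add hsum hmem'
    simpa [sub_add_cancel] using h2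
  have hT : (∑ i, rsmul (t i) (c i)) ≠ 0 := fun h0 => hc (hind c h0)
  exact hqa _ hT hqT

omit hg hq

/-- the combined hermitian form: anisotropic block from `v` plus a diagonal block. -/
def gform (θ : D → D) (h : (Fin n → D) → (Fin n → D) → D) {p s : ℕ}
    (v : Fin p → Fin n → D) (sv : Fin s → D) :
    (Fin (p + s) → D) → (Fin (p + s) → D) → D :=
  fun x y =>
    h (∑ i, rsmul (v i) (x (Fin.castAdd s i))) (∑ j, rsmul (v j) (y (Fin.castAdd s j))) +
      ∑ i, θ (x (Fin.natAdd p i)) * sv i * y (Fin.natAdd p i)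

lemma sum_rsmul_coeff_add {p : ℕ} (v : Fin p → Fin n → D) (a b : Fin p → D) :
    (∑ i, rsmul (v i) ((a + b) i)) = (∑ i, rsmul (v i) (a i)) + ∑ i, rsmul (v i) (b i) := by
  rw [← Finset.sum_add_distrib]
  exact Finset.sum_congr rfl fun i _ => by rw [Pi.add_apply, rsmul_add_right]

lemma sum_rsmul_coeff_mul {p : ℕ} (v : Fin p → Fin n → D) (a : Fin p → D) (d : D) :
    (∑ i, rsmul (v i) (a i * d)) = rsmul (∑ i, rsmul (v i) (a i)) d := by
  funext k
  rw [Finset.sum_apply]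
  show _ = (∑ i, rsmul (v i) (a i)) k * d
  rw [Finset.sum_apply, Finset.sum_mul]
  exact Finset.sum_congr rfl fun i _ => by
    show v i k * (a i * d) = v i k * a i * d
    rw [mul_assoc]

include hg

lemma gform_isHerm (hh : IsHermForm θ n h) {p s : ℕ}
    (v : Fin p → Fin n → D) (sv : Fin s → D) (hsym : ∀ i, θ (sv i) = sv i) :
    IsHermForm θ (p + s) (gform θ h v sv) := by
  refine ⟨?_, ?_, ?_, ?_⟩
  · intro x x' y
    unfold gform
    have e1 : (∑ i, rsmul (v i) ((x + x') (Fin.castAdd s i)))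
        = (∑ i, rsmul (v i) (x (Fin.castAdd s i))) + ∑ i, rsmul (v i) (x' (Fin.castAdd s i)) :=
      sum_rsmul_coeff_add v _ _
    rw [e1, hh.1]
    have e2 : ∀ i, θ ((x + x') (Fin.natAdd p i)) * sv i * y (Fin.natAdd p i)
        = θ (x (Fin.natAdd p i)) * sv i * y (Fin.natAdd p i)
          + θ (x' (Fin.natAdd p i)) * sv i * y (Fin.natAdd p i) := by
      intro i
      rw [Pi.add_apply, hg.addm, add_mul, add_mul]
    rw [Finset.sum_congr rfl fun i _ => e2 i, Finset.sum_add_distrib]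
    abel
  · intro x y y'
    unfold gform
    have e1 : (∑ i, rsmul (v i) ((y + y') (Fin.castAdd s i)))
        = (∑ i, rsmul (v i) (y (Fin.castAdd s i))) + ∑ i, rsmul (v i) (y' (Fin.castAdd s i)) :=
      sum_rsmul_coeff_add v _ _
    rw [e1, hh.2.1]
    have e2 : ∀ i, θ (x (Fin.natAdd p i)) * sv i * (y + y') (Fin.natAdd p i)
        = θ (x (Fin.natAdd p i)) * sv i * y (Fin.natAdd p i)
          + θ (x (Fin.natAdd p i)) * sv i * y' (Fin.natAdd p i) := by
      intro i
      rw [Pi.add_apply, mul_add]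
    rw [Finset.sum_congr rfl fun i _ => e2 i, Finset.sum_add_distrib]
    abel
  · intro x y d₁ d₂
    unfold gform
    have e1 : (∑ i, rsmul (v i) (rsmul x d₁ (Fin.castAdd s i)))
        = rsmul (∑ i, rsmul (v i) (x (Fin.castAdd s i))) d₁ := sum_rsmul_coeff_mul v _ _
    have e2 : (∑ j, rsmul (v j) (rsmul y d₂ (Fin.castAdd s j)))
        = rsmul (∑ j, rsmul (v j) (y (Fin.castAdd s j))) d₂ := sum_rsmul_coeff_mul v _ _
    rw [e1, e2, hh.2.2.1, mul_add, add_mul, Finset.mul_sum, Finset.sum_mul]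
    congr 1
    refine Finset.sum_congr rfl fun i _ => ?_
    show θ (x (Fin.natAdd p i) * d₁) * sv i * (y (Fin.natAdd p i) * d₂) = _
    rw [hg.mulm]
    noncomm_ring
  · intro x y
    unfold gform
    rw [hg.addm, hh.2.2.2, hg.theta_sum]
    congr 1
    refine Finset.sum_congr rfl fun i _ => ?_
    show θ (y (Fin.natAdd p i)) * sv i * x (Fin.natAdd p i)
        = θ (θ (x (Fin.natAdd p i)) * sv i * y (Fin.natAdd p i))
    rw [hg.mulm, hg.mulm, hg.invol, hsym i, ← mul_assoc]

include hg hq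

lemma gform_aniso (hqa : QuadAnisotropic θ n q) {p s : ℕ}
    (v : Fin p → Fin n → D) (t : Fin s → Fin n → D)
    (horth : ∀ i j, h (t i) (t j) = 0)
    (hind : ∀ c : Fin s → D, (∑ i, rsmul (t i) (c i)) = 0 → c = 0)
    (hv : ∀ a : Fin p → D,
      h (∑ i, rsmul (v i) (a i)) (∑ i, rsmul (v i) (a i)) = 0 → a = 0) :
    HermAnisotropic (p + s) (gform θ h v (fun i => q (t i))) := by
  intro x hx
  set a : Fin p → D := fun i => x (Fin.castAdd s i) with ha
  set c : Fin s → D := fun i => x (Fin.natAdd p i) with hc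
  have hx' : h (∑ i, rsmul (v i) (a i)) (∑ j, rsmul (v j) (a j))
      + ∑ i, θ (c i) * q (t i) * c i = 0 := hx
  by_cases hc0 : c = 0
  · have hz : (∑ i, θ (c i) * q (t i) * c i) = 0 := by
      rw [hc0]
      refine Finset.sum_eq_zero fun i _ => ?_
      simp [hg.theta_zero]
    rw [hz, add_zero] at hx'
    have ha0 := hv a hx'
    funext k
    refine Fin.addCases (motive := fun k => x k = 0) ?_ ?_ k
    · intro i; exact congrFun ha0 i
    · intro i; exact congrFun hc0 i
  · exfalso
    have hsum := q_sum_alt hg hq t c horth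
    have hdiagAlt := h_diag_alt hg hq (∑ i, rsmul (v i) (a i))
    -- from hx' : S = - hUU; so ∑ term ∈ Alt
    have hS : (∑ i, θ (c i) * q (t i) * c i) ∈ AltSet θ := by
      have : (∑ i, θ (c i) * q (t i) * c i)
          = h (∑ i, rsmul (v i) (a i)) (∑ j, rsmul (v j) (a j))
            + (h (∑ i, rsmul (v i) (a i)) (∑ j, rsmul (v j) (a j))
              + ∑ i, θ (c i) * q (t i) * c i) := by
        rw [← add_assoc, hg.char2, zero_add]
      rw [this, hx', add_zero]
      exact hdiagAlt
    have hqT : q (∑ i, rsmul (t i) (c i)) ∈ AltSet θ := by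
      have h2 := hg.alt_add hsum hS
      simpa [sub_add_cancel] using h2
    have hT : (∑ i, rsmul (t i) (c i)) ≠ 0 := fun h0 => hc0 (hind c h0)
    exact hqa _ hT hqT

omit hg hq

lemma op_smul_eq_mul (d a : D) : (MulOpposite.op d) • a = a * d := rfl

/-- the linear map `h z ·` over `Dᵐᵒᵖ`. -/
def hmap (hg : Good θ) (hh : IsHermForm θ n h) (z : Fin n → D) :
    (Fin n → D) →ₗ[Dᵐᵒᵖ] D where
  toFun := fun y => h z y
  map_add' := fun a b => hh.2.1 z a b
  map_smul' := fun d y => by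
    show h z (MulOpposite.op d.unop • y) = _
    rw [op_smul_eq_rsmul, h_smul_right hg hh]
    rfl

@[simp] lemma hmap_apply (hg : Good θ) (hh : IsHermForm θ n h) (z y : Fin n → D) :
    hmap hg hh z y = h z y := rfl

/-- the coordinate functional over `Dᵐᵒᵖ`. -/
def coordMap (n : ℕ) (j : Fin n) : (Fin n → D) →ₗ[Dᵐᵒᵖ] D where
  toFun := fun z => z j
  map_add' := fun a b => rfl
  map_smul' := fun d z => rfl

/-- `D` is linearly equivalent to `Dᵐᵒᵖ` as a `Dᵐᵒᵖ`-module. -/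
def opSelfEquiv (D : Type*) [DivisionRing D] : D ≃ₗ[Dᵐᵒᵖ] Dᵐᵒᵖ where
  toFun := MulOpposite.op
  invFun := MulOpposite.unop
  map_add' := fun a b => rfl
  map_smul' := fun d a => rfl
  left_inv := fun a => rfl
  right_inv := fun a => rfl

lemma moduleFiniteOp (D : Type*) [DivisionRing D] : Module.Finite Dᵐᵒᵖ D :=
  Module.Finite.equiv (opSelfEquiv D).symm

include hg hq

/-- The main decomposition. -/
lemma decomp :
    ∀ (m : ℕ) (W : Submodule Dᵐᵒᵖ (Fin n → D)), Module.finrank Dᵐᵒᵖ ↥W = m →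
    ∃ (p s r : ℕ) (v : Fin p → Fin n → D) (t : Fin s → Fin n → D) (y : Fin r → Fin n → D),
      r ≤ s ∧
      (∀ i j, h (t i) (t j) = 0) ∧
      (∀ c : Fin s → D, (∑ i, rsmul (t i) (c i)) = 0 → c = 0) ∧
      (∀ a : Fin p → D,
        h (∑ i, rsmul (v i) (a i)) (∑ i, rsmul (v i) (a i)) = 0 → a = 0) ∧
      (∀ i, t i ∈ W) ∧
      (∀ w ∈ W, w ∈ Submodule.span Dᵐᵒᵖ (Set.range v ∪ Set.range t ∪ Set.range y)) := by
  haveI : Module.Finite Dᵐᵒᵖ D := moduleFiniteOp D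
  intro m
  induction m using Nat.strong_induction_on with
  | _ m IH =>
  intro W hW
  by_cases han : ∀ z ∈ W, h z z = 0 → z = 0
  · -- Case 1 : `h` is anisotropic on `W`
    let b := (Module.finBasis Dᵐᵒᵖ ↥W).reindex (finCongr (by rw [hW]))
    set v : Fin m → Fin n → D := fun i => ((b i : ↥W) : Fin n → D) with hv
    refine ⟨m, 0, 0, v, fun i => i.elim0, fun i => i.elim0, le_refl 0,
      fun i => i.elim0, fun c _ => funext fun i => i.elim0, ?_, fun i => i.elim0, ?_⟩
    · intro a hsum
      have hcoe : (∑ i, rsmul (v i) (a i))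
          = ((∑ i, (MulOpposite.op (a i)) • (b i) : ↥W) : Fin n → D) := by
        push_cast [Submodule.coe_sum]
        exact Finset.sum_congr rfl fun i _ => rfl
      rw [hcoe] at hsum
      have hz : (∑ i, (MulOpposite.op (a i)) • (b i) : ↥W) = 0 :=
        Subtype.ext (han _ (Submodule.coe_mem _) hsum)
      have hli := Fintype.linearIndependent_iff.mp b.linearIndependent
        (fun i => MulOpposite.op (a i)) hz
      exact funext fun i => by
        have := hli i
        simpa using this
    · intro w hw
      have hmem : (⟨w, hw⟩ : ↥W) ∈ Submodule.span Dᵐᵒᵖ (Set.range ⇑b) := by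
        rw [b.span_eq]; trivial
      have hmem2 : w ∈ Submodule.map W.subtype (Submodule.span Dᵐᵒᵖ (Set.range ⇑b)) :=
        ⟨⟨w, hw⟩, hmem, rfl⟩
      rw [Submodule.map_span] at hmem2
      have himg : W.subtype '' Set.range ⇑b = Set.range v := by
        rw [← Set.range_comp]
        rfl
      rw [himg] at hmem2
      refine Submodule.span_mono ?_ hmem2
      intro z hz
      exact Set.mem_union_left _ (Set.mem_union_left _ hz)
  · push_neg at han
    obtain ⟨x, hxW, hxx, hx0⟩ := han
    by_cases hrad : ∀ w ∈ W, h x w = 0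
    · -- Case 2 : `x` is in the radical of `h` on `W`
      obtain ⟨j, hj⟩ : ∃ j, x j ≠ 0 := Function.ne_iff.mp hx0
      set W₁ := W ⊓ LinearMap.ker (coordMap n j) with hW₁def
      have hx1 : x ∉ W₁ := by
        intro hmem
        exact hj (LinearMap.mem_ker.mp hmem.2)
      have hlt : W₁ < W := lt_of_le_of_ne inf_le_left (fun he => hx1 (he ▸ hxW))
      have hfr : Module.finrank Dᵐᵒᵖ ↥W₁ < m :=
        hW ▸ Submodule.finrank_lt_finrank_of_lt hlt
      obtain ⟨p, s, r, v, t, y, hrs, horth, hind, hvcond, htW, hspan⟩ := IH _ hfr W₁ rfl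
      refine ⟨p, s + 1, r, v, Fin.cons x t, y, hrs.trans (Nat.le_succ s), ?_, ?_, hvcond, ?_, ?_⟩
      · -- pairwise orthogonality
        intro i j
        rcases Fin.eq_zero_or_eq_succ i with rfl | ⟨i', rfl⟩ <;>
          rcases Fin.eq_zero_or_eq_succ j with rfl | ⟨j', rfl⟩
        · simpa [Fin.cons_zero] using hxx
        · simp only [Fin.cons_zero, Fin.cons_succ]
          exact hrad _ ((htW j').1)
        · simp only [Fin.cons_zero, Fin.cons_succ]
          rw [hq.1.2.2.2 x (t i'), hrad _ ((htW i').1), hg.theta_zero]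
        · simp only [Fin.cons_succ]
          exact horth i' j'
      · -- linear independence of the `t`-family
        intro c hc0
        rw [Fin.sum_univ_succ] at hc0
        simp only [Fin.cons_zero, Fin.cons_succ] at hc0
        have hcoord := congrFun hc0 j
        rw [Pi.add_apply, Finset.sum_apply, Pi.zero_apply] at hcoord
        have hsum0 : (∑ i : Fin s, rsmul (t i) (c i.succ) j) = 0 := by
          refine Finset.sum_eq_zero fun i _ => ?_
          show t i j * c i.succ = 0
          have htj : t i j = 0 := LinearMap.mem_ker.mp (htW i).2
          rw [htj, zero_mul]
        rw [hsum0, add_zero] at hcoord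
        have hc00 : c 0 = 0 := by
          have := mul_eq_zero.mp hcoord
          exact this.resolve_left hj
        rw [hc00, rsmul_zero, zero_add] at hc0
        have htail := hind (fun i => c i.succ) hc0
        funext k
        rcases Fin.eq_zero_or_eq_succ k with rfl | ⟨k', rfl⟩
        · exact hc00
        · exact congrFun htail k'
      · -- membership
        intro i
        rcases Fin.eq_zero_or_eq_succ i with rfl | ⟨i', rfl⟩
        · simpa [Fin.cons_zero] using hxW
        · simp only [Fin.cons_succ]
          exact (htW i').1
      · -- spanning
        intro w hw
        set d := (x j)⁻¹ * w j with hd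
        have hrx : rsmul x d ∈ W := by
          rw [← op_smul_eq_rsmul]
          exact Submodule.smul_mem _ _ hxW
        have hw₁W₁ : w - rsmul x d ∈ W₁ := by
          refine ⟨sub_mem hw hrx, LinearMap.mem_ker.mpr ?_⟩
          show (w - rsmul x d) j = 0
          rw [Pi.sub_apply]
          show w j - x j * d = 0
          rw [hd, ← mul_assoc, mul_inv_cancel₀ hj, one_mul, sub_self]
        have h1 := hspan _ hw₁W₁
        have hsub : Set.range v ∪ Set.range t ∪ Set.range y ⊆
            Set.range v ∪ Set.range (Fin.cons x t : Fin (s+1) → Fin n → D) ∪ Set.range y := by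
          refine Set.union_subset_union_left _ (Set.union_subset_union_right _ ?_)
          rintro z ⟨i, rfl⟩
          exact ⟨i.succ, by rw [Fin.cons_succ]⟩
        have hxspan : x ∈ Submodule.span Dᵐᵒᵖ
            (Set.range v ∪ Set.range (Fin.cons x t : Fin (s+1) → Fin n → D) ∪ Set.range y) :=
          Submodule.subset_span (Set.mem_union_left _ (Set.mem_union_right _ ⟨0, Fin.cons_zero _ _⟩))
        have : w = (w - rsmul x d) + MulOpposite.op d • x := by
          rw [op_smul_eq_rsmul, sub_add_cancel]
        rw [this]
        exact add_mem (Submodule.span_mono hsub h1) (Submodule.smul_mem _ _ hxspan)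
    · -- Case 3 : there is a hyperbolic-type pair
      push_neg at hrad
      obtain ⟨w₀, hw₀W, hc⟩ := hrad
      obtain ⟨y₀, hy₀⟩ : ∃ y₀, y₀ = rsmul w₀ (h x w₀)⁻¹ := ⟨_, rfl⟩
      have hy₀W : y₀ ∈ W := by
        rw [hy₀, ← op_smul_eq_rsmul]
        exact Submodule.smul_mem _ _ hw₀W
      have hxy₀ : h x y₀ = 1 := by
        rw [hy₀, h_smul_right hg hq.1, mul_inv_cancel₀ hc]
      have hy₀x : h y₀ x = 1 := by
        rw [hq.1.2.2.2 x y₀, hxy₀, hg.theta_one]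
      obtain ⟨bb, hbb⟩ := h_diag_alt hg hq y₀
      obtain ⟨y₁, hy₁⟩ : ∃ y₁, y₁ = y₀ + rsmul x bb := ⟨_, rfl⟩
      have hy₁W : y₁ ∈ W := by
        rw [hy₁, ← op_smul_eq_rsmul]
        exact add_mem hy₀W (Submodule.smul_mem _ _ hxW)
      have hxy₁ : h x y₁ = 1 := by
        rw [hy₁, hq.1.2.1, hxy₀, h_smul_right hg hq.1, hxx, zero_mul, add_zero]
      have hy₁x : h y₁ x = 1 := by
        rw [hq.1.2.2.2 x y₁, hxy₁, hg.theta_one]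
      have hy₁y₁ : h y₁ y₁ = 0 := by
        have e1 : h y₀ (rsmul x bb) = bb := by
          rw [h_smul_right hg hq.1, hy₀x, one_mul]
        have e2 : h (rsmul x bb) y₀ = θ bb := by
          rw [h_smul_left hg hq.1, hxy₀, mul_one]
        have e3 : h (rsmul x bb) (rsmul x bb) = 0 := by
          rw [hq.1.2.2.1, hxx, mul_zero, zero_mul]
        rw [hy₁, hq.1.1, hq.1.2.1, hq.1.2.1, e1, e2, e3, hbb, hg.sub_eq, add_zero]
        calc bb + θ bb + bb + θ bb = (bb + bb) + (θ bb + θ bb) := by abel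
        _ = 0 := by rw [hg.char2, hg.char2, add_zero]
      set W₂ := W ⊓ LinearMap.ker (hmap hg hq.1 x) ⊓ LinearMap.ker (hmap hg hq.1 y₁)
        with hW₂def
      have hx2 : x ∉ W₂ := by
        intro hmem
        have h0 : h y₁ x = 0 := LinearMap.mem_ker.mp hmem.2
        rw [hy₁x] at h0
        exact one_ne_zero h0
      have hlt : W₂ < W := lt_of_le_of_ne (inf_le_left.trans inf_le_left)
        (fun he => hx2 (he ▸ hxW))
      have hfr : Module.finrank Dᵐᵒᵖ ↥W₂ < m :=
        hW ▸ Submodule.finrank_lt_finrank_of_lt hlt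
      obtain ⟨p, s, r, v, t, y, hrs, horth, hind, hvcond, htW, hspan⟩ := IH _ hfr W₂ rfl
      have htx : ∀ i, h x (t i) = 0 := fun i => LinearMap.mem_ker.mp (htW i).1.2
      have hty : ∀ i, h y₁ (t i) = 0 := fun i => LinearMap.mem_ker.mp (htW i).2
      refine ⟨p, s + 1, r + 1, v, Fin.cons x t, Fin.cons y₁ y,
        Nat.succ_le_succ hrs, ?_, ?_, hvcond, ?_, ?_⟩
      · -- pairwise orthogonality
        intro i j
        rcases Fin.eq_zero_or_eq_succ i with rfl | ⟨i', rfl⟩ <;>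
          rcases Fin.eq_zero_or_eq_succ j with rfl | ⟨j', rfl⟩
        · simpa [Fin.cons_zero] using hxx
        · simp only [Fin.cons_zero, Fin.cons_succ]
          exact htx j'
        · simp only [Fin.cons_zero, Fin.cons_succ]
          rw [hq.1.2.2.2 x (t i'), htx i', hg.theta_zero]
        · simp only [Fin.cons_succ]
          exact horth i' j'
      · -- linear independence
        intro c hc0
        rw [Fin.sum_univ_succ] at hc0
        simp only [Fin.cons_zero, Fin.cons_succ] at hc0
        have happ := congrArg (h y₁) hc0
        rw [hq.1.2.1, h_smul_right hg hq.1, hy₁x, one_mul,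
          h_sum_right hq.1, h_zero_right hq.1] at happ
        have hsum0 : (∑ i : Fin s, h y₁ (rsmul (t i) (c i.succ))) = 0 := by
          refine Finset.sum_eq_zero fun i _ => ?_
          rw [h_smul_right hg hq.1, hty i, zero_mul]
        rw [hsum0, add_zero] at happ
        rw [happ, rsmul_zero, zero_add] at hc0
        have htail := hind (fun i => c i.succ) hc0
        funext k
        rcases Fin.eq_zero_or_eq_succ k with rfl | ⟨k', rfl⟩
        · exact happ
        · exact congrFun htail k'
      · -- membership
        intro i
        rcases Fin.eq_zero_or_eq_succ i with rfl | ⟨i', rfl⟩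
        · simpa [Fin.cons_zero] using hxW
        · simp only [Fin.cons_succ]
          exact (htW i').1.1
      · -- spanning
        intro w hw
        obtain ⟨ac, hac⟩ : ∃ ac, ac = h y₁ w := ⟨_, rfl⟩
        obtain ⟨bc, hbc⟩ : ∃ bc, bc = h x w := ⟨_, rfl⟩
        have hrxy : rsmul x ac + rsmul y₁ bc ∈ W := by
          rw [← op_smul_eq_rsmul, ← op_smul_eq_rsmul]
          exact add_mem (Submodule.smul_mem _ _ hxW) (Submodule.smul_mem _ _ hy₁W)
        have hw₂ : w - (rsmul x ac + rsmul y₁ bc) ∈ W₂ := by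
          refine ⟨⟨sub_mem hw hrxy, LinearMap.mem_ker.mpr ?_⟩, LinearMap.mem_ker.mpr ?_⟩
          · show h x (w - (rsmul x ac + rsmul y₁ bc)) = 0
            rw [h_sub_right hq.1, hq.1.2.1, h_smul_right hg hq.1, h_smul_right hg hq.1,
              hxx, zero_mul, hxy₁, one_mul, zero_add, ← hbc, sub_self]
          · show h y₁ (w - (rsmul x ac + rsmul y₁ bc)) = 0
            rw [h_sub_right hq.1, hq.1.2.1, h_smul_right hg hq.1, h_smul_right hg hq.1,
              hy₁x, one_mul, hy₁y₁, zero_mul, add_zero, ← hac, sub_self]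
        have h1 := hspan _ hw₂
        have hsub : Set.range v ∪ Set.range t ∪ Set.range y ⊆
            Set.range v ∪ Set.range (Fin.cons x t : Fin (s+1) → Fin n → D) ∪
              Set.range (Fin.cons y₁ y : Fin (r+1) → Fin n → D) := by
          refine Set.union_subset_union ?_ ?_
          · refine Set.union_subset_union_right _ ?_
            rintro z ⟨i, rfl⟩
            exact ⟨i.succ, by rw [Fin.cons_succ]⟩
          · rintro z ⟨i, rfl⟩
            exact ⟨i.succ, by rw [Fin.cons_succ]⟩
        have hxspan : x ∈ Submodule.span Dᵐᵒᵖ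
            (Set.range v ∪ Set.range (Fin.cons x t : Fin (s+1) → Fin n → D) ∪
              Set.range (Fin.cons y₁ y : Fin (r+1) → Fin n → D)) :=
          Submodule.subset_span
            (Set.mem_union_left _ (Set.mem_union_right _ ⟨0, Fin.cons_zero _ _⟩))
        have hyspan : y₁ ∈ Submodule.span Dᵐᵒᵖ
            (Set.range v ∪ Set.range (Fin.cons x t : Fin (s+1) → Fin n → D) ∪
              Set.range (Fin.cons y₁ y : Fin (r+1) → Fin n → D)) :=
          Submodule.subset_span (Set.mem_union_right _ ⟨0, Fin.cons_zero _ _⟩)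
        have hwdec : w = (w - (rsmul x ac + rsmul y₁ bc))
            + (MulOpposite.op ac • x + MulOpposite.op bc • y₁) := by
          rw [op_smul_eq_rsmul, op_smul_eq_rsmul, sub_add_cancel]
        rw [hwdec]
        exact add_mem (Submodule.span_mono hsub h1)
          (add_mem (Submodule.smul_mem _ _ hxspan) (Submodule.smul_mem _ _ hyspan))

end Quad

lemma nalt_of_noncomm {θ : D → D}
    (haddm : ∀ a b : D, θ (a + b) = θ a + θ b)
    (hmulm : ∀ a b : D, θ (a * b) = θ b * θ a)
    (hinvol : ∀ a : D, θ (θ a) = a)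
    (hch : ∀ a : D, a + a = 0)
    (hD : ∃ a b : D, a * b ≠ b * a) : ∃ z : D, z ∉ AltSet θ := by
  by_contra hno
  push_neg at hno
  obtain ⟨a, b, hab⟩ := hD
  have hneg : ∀ u : D, θ (-u) = - θ u := by
    intro u
    have h0 : θ (0 : D) = 0 := by
      have := haddm 0 0
      simp only [add_zero] at this
      exact (left_eq_add.mp this)
    have := haddm u (-u)
    rw [add_neg_cancel, h0] at this
    exact (eq_neg_of_add_eq_zero_right this.symm)
  have hid : ∀ z : D, θ z = z := by
    intro z
    obtain ⟨c, hc⟩ := hno z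
    have hneq : ∀ u : D, -u = u := fun u => neg_eq_of_add_eq_zero_left (hch u)
    rw [hc, sub_eq_add_neg, haddm, hneg, hinvol, hneq, hneq, add_comm]
  exact hab (by rw [← hid (a * b), hmulm, hid a, hid b])

end Stmt6Aux

/-- If `D` is not a field then `u(D) ≤ u⁺(D) + u⁺_d(D)`. -/
theorem stmt6 {F D : Type*} [Field F] [CharP F 2] [DivisionRing D] [Algebra F D]
    [FiniteDimensional F D] [Algebra.IsCentral F D]
    (θ : D → D) (hθ : IsFInvolution F θ)
    (hD : ∃ a b : D, a * b ≠ b * a) :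
    uQuad θ ≤ uHermPlus θ + uHermPlusDirect θ := by
  classical
  have hch : ∀ a : D, a + a = 0 := by
    intro a
    have h2F : (2 : F) = 0 := by exact_mod_cast CharP.cast_eq_zero F 2
    calc a + a = (2 : F) • a := (two_smul F a).symm
    _ = (0 : F) • a := by rw [h2F]
    _ = 0 := zero_smul F a
  have hg : Stmt6Aux.Good θ :=
    ⟨hθ.1, hθ.2.2.1, hθ.2.2.2, hch,
      Stmt6Aux.nalt_of_noncomm hθ.1 hθ.2.2.1 hθ.2.2.2 hch hD⟩
  haveI : Module.Finite Dᵐᵒᵖ D := Stmt6Aux.moduleFiniteOp D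
  unfold uQuad
  refine iSup₂_le fun n hn => ?_
  obtain ⟨q, h, hq, hqa⟩ := hn
  obtain ⟨p, s, r, v, t, y, hrs, horth, hind, hvcond, htW, hspan⟩ :=
    Stmt6Aux.decomp hg hq (Module.finrank Dᵐᵒᵖ ↥(⊤ : Submodule Dᵐᵒᵖ (Fin n → D))) ⊤ rfl
  -- counting
  have hntop : Module.finrank Dᵐᵒᵖ (Fin n → D) = n := by
    have e : (Fin n → D) ≃ₗ[Dᵐᵒᵖ] (Fin n → Dᵐᵒᵖ) :=
      LinearEquiv.piCongrRight (fun _ => Stmt6Aux.opSelfEquiv D)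
    rw [e.finrank_eq, Module.finrank_pi, Fintype.card_fin]
  have hspan_top : Submodule.span Dᵐᵒᵖ (Set.range v ∪ Set.range t ∪ Set.range y) = ⊤ :=
    Submodule.eq_top_iff'.mpr (fun w => hspan w trivial)
  have hcount : n ≤ p + s + r := by
    have hrange : Set.range v ∪ Set.range t ∪ Set.range y
        = Set.range (Sum.elim v (Sum.elim t y)) := by
      rw [Set.Sum.elim_range, Set.Sum.elim_range, Set.union_assoc]
    have hb := finrank_span_le_card (R := Dᵐᵒᵖ)
      (Set.range (Sum.elim v (Sum.elim t y)))
    have hcard : (Set.range (Sum.elim v (Sum.elim t y))).toFinset.card ≤ p + s + r := by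
      rw [Set.toFinset_range]
      calc (Finset.univ.image (Sum.elim v (Sum.elim t y))).card
          ≤ Finset.univ.card := Finset.card_image_le
      _ = p + (s + r) := by
          rw [Finset.card_univ, Fintype.card_sum, Fintype.card_sum, Fintype.card_fin,
            Fintype.card_fin, Fintype.card_fin]
      _ ≤ p + s + r := by omega
    have hfr : n = Module.finrank Dᵐᵒᵖ
        ↥(Submodule.span Dᵐᵒᵖ (Set.range (Sum.elim v (Sum.elim t y)))) := by
      rw [← hrange, hspan_top, finrank_top, hntop]
    omega
  -- the two hermitian forms
  have hsym : ∀ i, θ (q (t i)) = q (t i) :=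
    fun i => Stmt6Aux.q_theta_eq hg hq (t i) (horth i i)
  have hsmem : s ∈ {m : ℕ | ∃ h', IsHermForm θ m h' ∧ HermDirect θ m h'} :=
    ⟨diagHerm θ (fun i => q (t i)),
      Stmt6Aux.diagHerm_isHerm hg hq _ hsym,
      Stmt6Aux.diagHerm_direct hg hq hqa t horth hind⟩
  have hpsmem : (p + s) ∈ {m : ℕ | ∃ h', IsHermForm θ m h' ∧ HermAnisotropic m h'} :=
    ⟨Stmt6Aux.gform θ h v (fun i => q (t i)),
      Stmt6Aux.gform_isHerm hg hq.1 v _ hsym,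
      Stmt6Aux.gform_aniso hg hq hqa v t horth hind hvcond⟩
  have h1 : ((p + s : ℕ) : ℕ∞) ≤ uHermPlus θ := by
    unfold uHermPlus
    exact le_biSup _ hpsmem
  have h2 : ((r : ℕ) : ℕ∞) ≤ uHermPlusDirect θ := by
    unfold uHermPlusDirect
    refine le_trans (Nat.cast_le.mpr hrs) (le_biSup _ hsmem)
  calc ((n : ℕ) : ℕ∞) ≤ (((p + s) + r : ℕ) : ℕ∞) := Nat.cast_le.mpr (by omega)
  _ = ((p + s : ℕ) : ℕ∞) + ((r : ℕ) : ℕ∞) := by push_cast; ring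
  _ ≤ uHermPlus θ + uHermPlusDirect θ := add_le_add h1 h2



end GenQuadForm
end

section
/- Let F be a field of characteristic 2 and D a finite-dimensional central division algebra over F carrying an F-linear involution. Then u⁺_d(D) ≤ [F:F²]/deg(D), i.e. deg(D) · u⁺_d(D) ≤ [F:F²] (in ℕ ∪ {∞}). -/
/-! Let `Sym ⊇ Alt` be the `F`-spaces of symmetric and alternating elements of `(D, θ)` (the
inclusion holds in characteristic `2`). For a direct hermitian form `h` on `Dⁿ`, the map
`q : x ↦ h(x,x) + Alt` into `Sym / Alt` is additive, satisfies `q (c • x) = c² • q x`, and is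
injective by directness; hence an `F`-basis of `Dⁿ` is sent to an `F²`-linearly independent family, and
`n · deg(D)² ≤ [F:F²] · dim_F (Sym / Alt)`. It remains to show `dim Sym - dim Alt ≤ deg D`.

Put `u = 1 - θ`, so `u² = 0`, `ker u = Sym`, `im u = Alt`, and let `k = dim Sym`, `r = dim Alt`,
`N = k + r = deg(D)²`. The commutator map `[u, -]` on `End_F D` has image of dimension at most `2kr`,
so the centralizer of `u`, which is also the centralizer of `θ`, has dimension at least `k² + r²`.
Since `D` is central and a division ring, the maps `x ↦ θ(aᵢ) x aⱼ` (`aᵢ` an `F`-basis of `D`) form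
a basis of `End_F D` on which conjugation by `θ` swaps `i` and `j`; so that centralizer has
dimension at most `N(N+1)/2`. Together, `(k - r)² ≤ N`. -/

noncomputable section GenQuadForm

open scoped TensorProduct

open Module Finset

namespace IsFInvolution

variable {F D : Type*} [Field F] [Ring D] [Algebra F D] {θ : D → D}

def toLinearMap (hθ : IsFInvolution F θ) : D →ₗ[F] D where
  toFun := θ
  map_add' := hθ.1
  map_smul' := hθ.2.1

@[simp]
lemma toLinearMap_apply (hθ : IsFInvolution F θ) (x : D) : hθ.toLinearMap x = θ x := rfl

lemma map_one (hθ : IsFInvolution F θ) : θ 1 = 1 :=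
  calc θ 1 = θ 1 * θ (θ 1) := by rw [hθ.2.2.2, mul_one]
    _ = 1 := by rw [← hθ.2.2.1, mul_one, hθ.2.2.2]

lemma map_algebraMap (hθ : IsFInvolution F θ) (c : F) :
    θ (algebraMap F D c) = algebraMap F D c := by
  rw [Algebra.algebraMap_eq_smul_one, hθ.2.1, hθ.map_one]

def symSubmodule (hθ : IsFInvolution F θ) : Submodule F D :=
  LinearMap.ker (1 - hθ.toLinearMap)

def altSubmodule (hθ : IsFInvolution F θ) : Submodule F D :=
  LinearMap.range (1 - hθ.toLinearMap)

lemma mem_symSubmodule (hθ : IsFInvolution F θ) {x : D} : x ∈ hθ.symSubmodule ↔ θ x = x := by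
  simp [symSubmodule, sub_eq_zero, eq_comm]

lemma mem_altSubmodule (hθ : IsFInvolution F θ) {x : D} : x ∈ hθ.altSubmodule ↔ x ∈ AltSet θ := by
  simp [altSubmodule, AltSet, eq_comm]

lemma toLinearMap_mul_self (hθ : IsFInvolution F θ) : hθ.toLinearMap * hθ.toLinearMap = 1 :=
  LinearMap.ext hθ.2.2.2

lemma one_sub_toLinearMap_sq [CharP D 2] (hθ : IsFInvolution F θ) :
    (1 - hθ.toLinearMap) * (1 - hθ.toLinearMap) = 0 := by
  ext x
  simp [hθ.1, hθ.2.2.2, CharTwo.sub_eq_add]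
  rw [add_comm (θ x) x, CharTwo.add_self_eq_zero]

lemma altSubmodule_le_symSubmodule [CharP D 2] (hθ : IsFInvolution F θ) :
    hθ.altSubmodule ≤ hθ.symSubmodule :=
  LinearMap.range_le_ker_iff.mpr hθ.one_sub_toLinearMap_sq

end IsFInvolution

theorem eq_zero_of_forall_sum_mul_mul_eq_zero {F D ι : Type*} [Field F] [DivisionRing D]
    [Algebra F D] [Algebra.IsCentral F D] {a : ι → D} (ha : LinearIndependent F a)
    (s : Finset ι) (c : ι → D) (hc : ∀ x, ∑ i ∈ s, c i * x * a i = 0) : ∀ i ∈ s, c i = 0 := by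
  classical
  induction s using Finset.induction_on generalizing c with
  | empty => simp
  | insert j s hj ih =>
    by_cases hcj : c j = 0
    · have hs : ∀ x, ∑ i ∈ s, c i * x * a i = 0 := fun x => by
        simpa [Finset.sum_insert hj, hcj] using hc x
      intro i hi
      rcases Finset.mem_insert.mp hi with rfl | hi
      exacts [hcj, ih c hs i hi]
    exfalso
    set c' : ι → D := fun i => (c j)⁻¹ * c i
    have hc'j : c' j = 1 := inv_mul_cancel₀ hcj
    have hc' : ∀ x, ∑ i ∈ insert j s, c' i * x * a i = 0 := fun x => by
      simp only [c', mul_assoc, ← Finset.mul_sum]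
      simp only [← mul_assoc, hc x, mul_zero]
    -- The commutators `[y, c' i]` satisfy a relation of the same kind with one term fewer.
    have hcomm : ∀ y, ∀ i ∈ insert j s, y * c' i = c' i * y := by
      intro y
      have hrel : ∀ x, ∑ i ∈ s, (y * c' i - c' i * y) * x * a i = 0 := by
        intro x
        have h : ∑ i ∈ insert j s, (y * c' i - c' i * y) * x * a i =
            y * ∑ i ∈ insert j s, c' i * x * a i - ∑ i ∈ insert j s, c' i * (y * x) * a i := by
          simp only [Finset.mul_sum, ← Finset.sum_sub_distrib, sub_mul, mul_assoc]
        rwa [hc', hc', mul_zero, sub_zero, Finset.sum_insert hj, hc'j, mul_one, one_mul,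
          sub_self, zero_mul, zero_mul, zero_add] at h
      intro i hi
      rcases Finset.mem_insert.mp hi with rfl | hi
      · rw [hc'j, mul_one, one_mul]
      · exact sub_eq_zero.mp (ih _ hrel i hi)
    have hcen : ∀ i ∈ insert j s, ∃ t : F, c' i = algebraMap F D t := fun i hi =>
      (Algebra.IsCentral.mem_center_iff F).mp (Subalgebra.mem_center_iff.mpr fun y => hcomm y i hi)
    choose! t ht using hcen
    have hsum : ∑ i ∈ insert j s, t i • a i = 0 := by
      rw [← hc' 1]
      refine Finset.sum_congr rfl fun i hi => ?_
      rw [ht i hi, mul_one, Algebra.smul_def]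
    have htj := linearIndependent_iff'.mp ha _ t hsum j (Finset.mem_insert_self j s)
    exact one_ne_zero (hc'j.symm.trans (by rw [ht j (Finset.mem_insert_self j s), htj, map_zero]))

theorem linearIndependent_mulLeftRight {F D ι κ : Type*} [Field F] [DivisionRing D]
    [Algebra F D] [Algebra.IsCentral F D] [Fintype ι] [Fintype κ] {b : ι → D} {a : κ → D}
    (hb : LinearIndependent F b) (ha : LinearIndependent F a) :
    LinearIndependent F (fun p : ι × κ => LinearMap.mulLeftRight F (b p.1, a p.2)) := by
  rw [Fintype.linearIndependent_iff]
  intro g hg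
  have hrel : ∀ x, ∑ j, (∑ i, g (i, j) • b i) * x * a j = 0 := by
    intro x
    have := LinearMap.congr_fun hg x
    simp only [Fintype.sum_prod_type, LinearMap.coe_sum, LinearMap.coe_smul, Finset.sum_apply,
      Pi.smul_apply, LinearMap.mulLeftRight_apply, LinearMap.zero_apply] at this
    rw [Finset.sum_comm] at this
    simpa [Finset.sum_mul, smul_mul_assoc] using this
  rintro ⟨i, j⟩
  exact Fintype.linearIndependent_iff.mp hb _
    (eq_zero_of_forall_sum_mul_mul_eq_zero ha univ _ hrel j (mem_univ j)) i

theorem two_mul_finrank_le_of_repr_swap_eq {F V ι : Type*} [Field F] [AddCommGroup V]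
    [Module F V] [Fintype ι] (B : Basis (ι × ι) F V) (W : Submodule F V)
    (hW : ∀ f ∈ W, ∀ p : ι × ι, B.repr f p.swap = B.repr f p) :
    2 * finrank F W ≤ Fintype.card ι * (Fintype.card ι + 1) := by
  classical
  let φ : W →ₗ[F] (Sym2 ι → F) :=
    LinearMap.pi fun s => Finsupp.lapply (Quot.out s) ∘ₗ B.repr.toLinearMap ∘ₗ W.subtype
  have hφ : Function.Injective φ := by
    rw [← LinearMap.ker_eq_bot, LinearMap.ker_eq_bot']
    intro f hf
    have hrepr : ∀ p, B.repr f p = 0 := by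
      intro p
      set q := Quot.out s(p.1, p.2)
      have hout : s(q.1, q.2) = s(p.1, p.2) := Quot.out_eq _
      have h0 : B.repr f q = 0 := congr_fun hf s(p.1, p.2)
      rcases Sym2.mk_eq_mk_iff.mp hout with h | h
      · rwa [h] at h0
      · rwa [h, hW f f.2] at h0
    exact Subtype.ext (B.repr.injective (Finsupp.ext fun p => by simp [hrepr p]))
  have hle := LinearMap.finrank_le_finrank_of_injective hφ
  rw [Module.finrank_fintype_fun_eq_card, Sym2.card, Nat.choose_two_right,
    Nat.add_sub_cancel, mul_comm] at hle
  calc 2 * finrank F W ≤ 2 * (Fintype.card ι * (Fintype.card ι + 1) / 2) := by omega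
    _ = _ := Nat.two_mul_div_two_of_even (Nat.even_mul_succ_self _)

theorem finrank_range_commutator_le {F V : Type*} [Field F] [AddCommGroup V] [Module F V]
    [FiniteDimensional F V] {u : Module.End F V} (hu : u * u = 0) :
    finrank F (LinearMap.range (LinearMap.mulLeft F u - LinearMap.mulRight F u)) ≤
      2 * (finrank F (LinearMap.ker u) * finrank F (LinearMap.range u)) := by
  set ad := LinearMap.mulLeft F u - LinearMap.mulRight F u
  have huu : ∀ x, u (u x) = 0 := fun x => LinearMap.congr_fun hu x
  have hmaps : ∀ g ∈ LinearMap.range ad, ∀ x ∈ LinearMap.ker u, g x ∈ LinearMap.range u := by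
    rintro _ ⟨f, rfl⟩ x hx
    exact ⟨f x, by simp [ad, LinearMap.mem_ker.mp hx]⟩
  have hanti : ∀ g ∈ LinearMap.range ad, ∀ x, u (g x) = -g (u x) := by
    rintro _ ⟨f, rfl⟩ x
    simp [ad, huu]
  obtain ⟨C, hC⟩ := Submodule.exists_isCompl (LinearMap.ker u)
  let Ψ : LinearMap.range ad →ₗ[F]
      (LinearMap.ker u →ₗ[F] LinearMap.range u) × (C →ₗ[F] V ⧸ C) :=
    { toFun := fun g => ((g : Module.End F V).restrict (hmaps g g.2),
        C.mkQ ∘ₗ (g : Module.End F V) ∘ₗ C.subtype)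
      map_add' := fun g g' => by ext <;> simp
      map_smul' := fun c g => by ext <;> simp }
  have hΨ : Function.Injective Ψ := by
    rw [← LinearMap.ker_eq_bot, LinearMap.ker_eq_bot']
    intro g hg
    have hker : ∀ x ∈ LinearMap.ker u, (g : Module.End F V) x = 0 := fun x hx => by
      simpa [Ψ] using congr_arg Subtype.val (LinearMap.congr_fun (congr_arg Prod.fst hg) ⟨x, hx⟩)
    have hcompl : ∀ x ∈ C, (g : Module.End F V) x = 0 := by
      intro x hx
      have hxC : (g : Module.End F V) x ∈ C := (Submodule.Quotient.mk_eq_zero C).mp <| by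
        simpa [Ψ] using LinearMap.congr_fun (congr_arg Prod.snd hg) ⟨x, hx⟩
      have hxK : (g : Module.End F V) x ∈ LinearMap.ker u := by
        rw [LinearMap.mem_ker, hanti g g.2, hker _ (LinearMap.mem_ker.mpr (huu x)), neg_zero]
      exact Submodule.disjoint_def.mp hC.disjoint _ hxK hxC
    ext x
    have hx : x ∈ LinearMap.ker u ⊔ C := hC.sup_eq_top ▸ Submodule.mem_top
    obtain ⟨a, ha, c, hc, rfl⟩ := Submodule.mem_sup.mp hx
    simp [hker a ha, hcompl c hc]
  have hrank := LinearMap.finrank_range_add_finrank_ker u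
  have hcompl := Submodule.finrank_add_eq_of_isCompl hC
  calc _ ≤ _ := LinearMap.finrank_le_finrank_of_injective hΨ
    _ = finrank F (LinearMap.ker u) * finrank F (LinearMap.range u) +
        finrank F (LinearMap.range u) * finrank F (LinearMap.ker u) := by
      rw [Module.finrank_prod, Module.finrank_linearMap, Module.finrank_linearMap,
        (Submodule.quotientEquivOfIsCompl C _ hC.symm).finrank_eq]
      congr 2
      omega
    _ = _ := by ring

theorem finrank_le_finrank_sqSubfield_mul {F V W : Type*} [Field F] [CharP F 2]
    [FiniteDimensional (sqSubfield F) F] [AddCommGroup V] [Module F V] [FiniteDimensional F V]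
    [AddCommGroup W] [Module F W] [FiniteDimensional F W]
    (q : V →+ W) (hq : ∀ (c : F) (x : V), q (c • x) = c ^ 2 • q x)
    (hq0 : ∀ x, q x = 0 → x = 0) :
    finrank F V ≤ finrank (sqSubfield F) F * finrank F W := by
  let b := Module.finBasis F V
  have hli : LinearIndependent (sqSubfield F) (q ∘ b) := by
    rw [linearIndependent_iff']
    intro s g hg i hi
    have hsqrt : ∀ j, ∃ c : F, c ^ 2 = g j := fun j => by
      obtain ⟨c, hc⟩ := RingHom.mem_fieldRange.mp (g j).2
      exact ⟨c, by rw [← hc, frobenius_def]⟩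
    choose c hc using hsqrt
    have hsum : ∑ j ∈ s, c j • b j = 0 := hq0 _ <| by
      simpa [map_sum, hq, hc, Subfield.smul_def] using hg
    have hci := linearIndependent_iff'.mp b.linearIndependent s c hsum i hi
    exact Subtype.ext (by rw [← hc i, hci, zero_pow two_ne_zero]; rfl)
  have : FiniteDimensional (sqSubfield F) W := FiniteDimensional.trans (sqSubfield F) F W
  calc finrank F V = Fintype.card (Fin (finrank F V)) := (Fintype.card_fin _).symm
    _ ≤ finrank (sqSubfield F) W := hli.fintype_card_le_finrank
    _ = _ := (Module.finrank_mul_finrank _ F W).symm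

namespace IsFInvolution

variable {F D : Type*} [Field F] [DivisionRing D] [Algebra F D]
  [FiniteDimensional F D] [Algebra.IsCentral F D] {θ : D → D}

theorem two_mul_finrank_commutant_le (hθ : IsFInvolution F θ) :
    2 * finrank F (LinearMap.ker (LinearMap.mulLeft F (1 - hθ.toLinearMap) -
      LinearMap.mulRight F (1 - hθ.toLinearMap))) ≤ finrank F D * (finrank F D + 1) := by
  set τ := hθ.toLinearMap
  have hτa : LinearIndependent F (θ ∘ Module.finBasis F D) :=
    (Module.finBasis F D).linearIndependent.map' τ
      (LinearMap.ker_eq_bot_of_inverse hθ.toLinearMap_mul_self)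
  let B := basisOfLinearIndependentOfCardEqFinrank'
    _ (linearIndependent_mulLeftRight hτa (Module.finBasis F D).linearIndependent)
    (by simp [Module.finrank_linearMap])
  have hB : ∀ p, B p = LinearMap.mulLeftRight F (θ (Module.finBasis F D p.1),
      Module.finBasis F D p.2) := fun p => by simp [B]
  have hconj : ∀ p, τ * B p * τ = B p.swap := by
    intro p
    ext x
    simp [hB, τ, hθ.2.2.1, hθ.2.2.2, mul_assoc]
  simpa using two_mul_finrank_le_of_repr_swap_eq B _ fun f hf p => by
    have hcomm : τ * f * τ = f := by
      have h : (1 - τ) * f = f * (1 - τ) := sub_eq_zero.mp hf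
      simp only [sub_mul, mul_sub, one_mul, mul_one, sub_right_inj] at h
      rw [h, mul_assoc, hθ.toLinearMap_mul_self, mul_one]
    have hsum : f = ∑ q, B.repr f q.swap • B q :=
      calc f = τ * (∑ q, B.repr f q • B q) * τ := by rw [B.sum_repr, hcomm]
        _ = ∑ q, B.repr f q • B q.swap := by
          simp only [Finset.mul_sum, Finset.sum_mul, mul_smul_comm, smul_mul_assoc, hconj]
        _ = ∑ q, B.repr f q.swap • B q :=
          Fintype.sum_equiv (Equiv.prodComm _ _) _ _ fun q => rfl
    have := congr_fun (B.equivFun.apply_symm_apply fun q => B.repr f q.swap) p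
    rw [B.equivFun_symm_apply, ← hsum, B.equivFun_apply] at this
    exact this.symm

theorem finrank_symSubmodule_le [CharP F 2] (hθ : IsFInvolution F θ) {d : ℕ} (hd : d * d = finrank F D) :
    finrank F hθ.symSubmodule ≤ finrank F hθ.altSubmodule + d := by
  have : CharP D 2 := charP_of_injective_algebraMap (algebraMap F D).injective 2
  set u := 1 - hθ.toLinearMap
  have hcommutant := hθ.two_mul_finrank_commutant_le
  have hcommutator := finrank_range_commutator_le hθ.one_sub_toLinearMap_sq
  have had := LinearMap.finrank_range_add_finrank_ker (LinearMap.mulLeft F u - LinearMap.mulRight F u)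
  have hu := LinearMap.finrank_range_add_finrank_ker u
  rw [Module.finrank_linearMap] at had
  change finrank F (LinearMap.ker u) ≤ finrank F (LinearMap.range u) + d
  nlinarith

theorem deg_mul_le_finrank_sqSubfield [CharP F 2] (hθ : IsFInvolution F θ) {d : ℕ}
    (hd : d * d = finrank F D) [FiniteDimensional (sqSubfield F) F] {n : ℕ}
    {h : (Fin n → D) → (Fin n → D) → D} (hh : IsHermForm θ n h) (hdir : HermDirect θ n h) :
    d * n ≤ finrank (sqSubfield F) F := by
  have : CharP D 2 := charP_of_injective_algebraMap (algebraMap F D).injective 2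
  set S := hθ.symSubmodule
  set A := hθ.altSubmodule.comap S.subtype
  have hS : ∀ x, h x x ∈ S := fun x => hθ.mem_symSubmodule.mpr (hh.2.2.2 x x).symm
  have hA : ∀ y : S, A.mkQ y = 0 ↔ (y : D) ∈ AltSet θ := fun y => by
    rw [Submodule.mkQ_apply, Submodule.Quotient.mk_eq_zero, Submodule.mem_comap,
      Submodule.subtype_apply, hθ.mem_altSubmodule]
  -- The polar part `h x y + h y x = h x y - θ (h x y)` is alternating in characteristic 2.
  let q : (Fin n → D) →+ S ⧸ A := AddMonoidHom.mk' (fun x => A.mkQ ⟨h x x, hS x⟩) fun x y => by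
    rw [← map_add, ← sub_eq_zero, ← map_sub, hA]
    refine ⟨h x y, ?_⟩
    simp only [AddSubgroupClass.coe_sub, AddMemClass.coe_add, hh.1, hh.2.1, ← hh.2.2.2 x y]
    rw [CharTwo.sub_eq_add (h x y)]
    abel
  have hq : ∀ (c : F) x, q (c • x) = c ^ 2 • q x := by
    intro c x
    have hcx : c • x = rsmul x (algebraMap F D c) := funext fun i => by
      rw [Pi.smul_apply, Algebra.smul_def, Algebra.commutes]; rfl
    have : h (c • x) (c • x) = c ^ 2 • h x x := by
      rw [hcx, hh.2.2.1, hθ.map_algebraMap, mul_assoc, ← Algebra.commutes, ← mul_assoc,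
        ← map_mul, ← Algebra.smul_def, sq]
    change A.mkQ _ = c ^ 2 • A.mkQ _
    rw [← map_smul]
    exact congr_arg A.mkQ (Subtype.ext this)
  have hq0 : ∀ x, q x = 0 → x = 0 := fun x hx => by
    by_contra hx0
    exact hdir x hx0 ((hA _).mp hx)
  have hdim := finrank_le_finrank_sqSubfield_mul (F := F) q hq hq0
  have hquot := Submodule.finrank_quotient_add_finrank A
  have hAalt : finrank F A = finrank F hθ.altSubmodule :=
    (Submodule.comapSubtypeEquivOfLe hθ.altSubmodule_le_symSubmodule).finrank_eq
  have hsym := hθ.finrank_symSubmodule_le hd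
  rw [Module.finrank_pi_fintype] at hdim
  simp only [Finset.sum_const, Finset.card_univ, Fintype.card_fin, smul_eq_mul] at hdim
  rcases Nat.eq_zero_or_pos d with rfl | hd0
  · simp
  refine Nat.le_of_mul_le_mul_right (c := d) ?_ hd0
  nlinarith

end IsFInvolution

lemma sqIndex_eq_finrank (F : Type*) [Field F] [CharP F 2]
    [FiniteDimensional (sqSubfield F) F] : sqIndex F = finrank (sqSubfield F) F := by
  rw [sqIndex, ← Module.finrank_eq_rank, Cardinal.toENat_nat]

lemma sqIndex_eq_top (F : Type*) [Field F] [CharP F 2]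
    (h : ¬FiniteDimensional (sqSubfield F) F) : sqIndex F = ⊤ := by
  rw [sqIndex, Cardinal.toENat_eq_top]
  exact not_lt.mp (mt Module.rank_lt_aleph0_iff.mp h)

/-- `u⁺_d(D) ≤ [F:F²]/deg(D)`, i.e. `deg(D) · u⁺_d(D) ≤ [F:F²]`
in `ℕ ∪ {∞}`, where `deg(D)` is the positive square root of `dim_F D`. -/
theorem stmt7 {F D : Type*} [Field F] [CharP F 2] [DivisionRing D] [Algebra F D]
    [FiniteDimensional F D] [Algebra.IsCentral F D]
    (θ : D → D) (hθ : IsFInvolution F θ)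
    (d : ℕ) (hd : d * d = Module.finrank F D) :
    (d : ℕ∞) * uHermPlusDirect θ ≤ sqIndex F := by
  rw [uHermPlusDirect, ENat.mul_iSup]
  refine iSup_le fun n => ?_
  rw [ENat.mul_iSup]
  refine iSup_le fun ⟨h, hh, hdir⟩ => ?_
  by_cases hfin : FiniteDimensional (sqSubfield F) F
  · rw [sqIndex_eq_finrank]
    exact_mod_cast hθ.deg_mul_le_finrank_sqSubfield hd hh hdir
  · rw [sqIndex_eq_top F hfin]
    exact le_top

end GenQuadForm
end

section
/- Let F be a field of characteristic 2 and Q an F-quaternion division algebra. Then u⁻(Q) ≤ (1/4)·ũ(F): if there exists an anisotropic alternating hermitian form of dimension n over (Q,γ) (γ the canonical involution), then there exists an anisotropic nonsingular quadratic form of dimension 4n over F. -/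
noncomputable section GenQuadForm

open scoped TensorProduct

/-!
In characteristic `2` every alternating element `b - γ b = b + γ b` is a reduced trace, so an
alternating hermitian form `h` on `Qⁿ` has all its diagonal values `h x x` in `F`. On `Qⁿ`,
viewed as a `4n`-dimensional `F`-space, `x ↦ h x x` is then a quadratic form with polar form
`Trd ∘ h`. It is anisotropic because `h` is, and nonsingular: if `h x x = Trd b ≠ 0`, then
`y ↦ h x y` is onto `Q`, so `Trd (h x ·) = 0` would force `h x x = Trd b = 0`.
-/

section Involution

variable {F D : Type*} [Field F] [Ring D] [Algebra F D] {γ : D → D}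

theorem IsFInvolution.map_one_s9 (hγ : IsFInvolution F γ) : γ 1 = 1 := by
  obtain ⟨-, -, hmul, hinv⟩ := hγ
  calc γ 1 = γ 1 * γ (γ 1) := by rw [hinv, mul_one]
    _ = γ (γ 1 * 1) := (hmul _ _).symm
    _ = 1 := by rw [mul_one, hinv]

theorem IsFInvolution.map_algebraMap_s9 (hγ : IsFInvolution F γ) (a : F) :
    γ (algebraMap F D a) = algebraMap F D a := by
  rw [Algebra.algebraMap_eq_smul_one, hγ.2.1, hγ.map_one_s9]

theorem exists_eq_algebraMap_trace_of_mem_altSet [CharP F 2] {trd : D → F}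
    (htrd : ∀ z, z + γ z = algebraMap F D (trd z)) {a : D} (ha : a ∈ AltSet γ) :
    ∃ b, a = algebraMap F D (trd b) := by
  obtain ⟨b, rfl⟩ := ha
  have two_eq_zero : (2 : D) = 0 := by
    rw [← map_ofNat (algebraMap F D) 2, CharTwo.two_eq_zero, map_zero]
  refine ⟨b, ?_⟩
  rw [← htrd, show b - γ b = b + γ b - 2 * γ b by rw [two_mul]; abel, two_eq_zero, zero_mul,
    sub_zero]

variable [Nontrivial D] {trd : D → F}

theorem IsFInvolution.trace_add (hγ : IsFInvolution F γ)
    (htrd : ∀ z, z + γ z = algebraMap F D (trd z)) (z w : D) :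
    trd (z + w) = trd z + trd w := by
  apply (algebraMap F D).injective
  rw [map_add, ← htrd, ← htrd, ← htrd, hγ.1]
  abel

theorem IsFInvolution.trace_algebraMap_mul (hγ : IsFInvolution F γ)
    (htrd : ∀ z, z + γ z = algebraMap F D (trd z)) (a : F) (z : D) :
    trd (algebraMap F D a * z) = a * trd z := by
  apply (algebraMap F D).injective
  rw [← htrd, map_mul, ← htrd, hγ.2.2.1, hγ.map_algebraMap_s9, mul_add,
    Algebra.commutes a (γ z)]

end Involution

section HermForm

variable {F D : Type*} [Field F] [Ring D] [Algebra F D] {γ : D → D} {n : ℕ}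
  {h : (Fin n → D) → (Fin n → D) → D}

@[simp]
theorem rsmul_one (x : Fin n → D) : rsmul x 1 = x := by
  funext i; simp [rsmul]

theorem smul_eq_rsmul_algebraMap (a : F) (x : Fin n → D) :
    a • x = rsmul x (algebraMap F D a) := by
  funext i; simp [rsmul, Algebra.smul_def, Algebra.commutes]

theorem IsHermForm.apply_rsmul_right (hh : IsHermForm γ n h) (hγ1 : γ 1 = 1)
    (x y : Fin n → D) (d : D) : h x (rsmul y d) = h x y * d := by
  simpa [hγ1] using hh.2.2.1 x y 1 d

theorem IsHermForm.apply_smul_left (hh : IsHermForm γ n h) (hγ : IsFInvolution F γ)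
    (a : F) (x y : Fin n → D) : h (a • x) y = algebraMap F D a * h x y := by
  simpa [hγ.map_algebraMap_s9, ← smul_eq_rsmul_algebraMap] using hh.2.2.1 x y (algebraMap F D a) 1

theorem IsHermForm.apply_smul_right (hh : IsHermForm γ n h) (hγ : IsFInvolution F γ)
    (a : F) (x y : Fin n → D) : h x (a • y) = h x y * algebraMap F D a := by
  rw [smul_eq_rsmul_algebraMap, hh.apply_rsmul_right hγ.map_one_s9]

end HermForm

section TraceForm

variable {F D : Type*} [Field F] {γ : D → D} {trd : D → F}
  {n m : ℕ} {h : (Fin n → D) → (Fin n → D) → D} {q : (Fin n → D) → F}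

section Ring

variable [Ring D] [Algebra F D]

theorem qFieldAnisotropic_comp (hani : HermAnisotropic n h)
    (hq : ∀ x, algebraMap F D (q x) = h x x) (e : (Fin m → F) →ₗ[F] (Fin n → D))
    (he : Function.Injective e) : QFieldAnisotropic m (q ∘ e) := by
  intro v hv
  refine he ?_
  rw [hani (e v) (by rw [← hq, Function.comp_apply.symm.trans hv, map_zero]), map_zero]

theorem nonempty_linearEquiv_fin_fun_pi [Module.Finite F D] (n : ℕ) :
    Nonempty ((Fin (Module.finrank F D * n) → F) ≃ₗ[F] (Fin n → D)) := by
  refine FiniteDimensional.nonempty_linearEquiv_of_finrank_eq ?_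
  simp [Module.finrank_pi_fintype, mul_comm]

variable [Nontrivial D]

theorem polarF_comp_eq_trace
    (htrd : ∀ z, z + γ z = algebraMap F D (trd z)) (hh : IsHermForm γ n h)
    (hq : ∀ x, algebraMap F D (q x) = h x x) (e : (Fin m → F) →ₗ[F] (Fin n → D))
    (v w : Fin m → F) : polarF (q ∘ e) v w = trd (h (e v) (e w)) := by
  apply (algebraMap F D).injective
  rw [← htrd, ← hh.2.2.2 (e v)]
  simp only [polarF, Function.comp_apply, map_sub, hq, map_add, hh.1, hh.2.1]
  abel

theorem isQuadFormField_comp (hγ : IsFInvolution F γ)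
    (htrd : ∀ z, z + γ z = algebraMap F D (trd z)) (hh : IsHermForm γ n h)
    (hq : ∀ x, algebraMap F D (q x) = h x x) (e : (Fin m → F) →ₗ[F] (Fin n → D)) :
    IsQuadFormField m (q ∘ e) := by
  refine ⟨fun a v ↦ ?_, fun v v' w ↦ ?_, fun a v w ↦ ?_⟩
  · apply (algebraMap F D).injective
    simp only [Function.comp_apply]
    rw [hq, map_smul, hh.apply_smul_left hγ, hh.apply_smul_right hγ, map_mul, hq,
      ← Algebra.commutes a, ← mul_assoc, ← map_mul, ← pow_two]
  · simp only [polarF_comp_eq_trace htrd hh hq, map_add, hh.1, hγ.trace_add htrd]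
  · simp only [polarF_comp_eq_trace htrd hh hq, map_smul, hh.apply_smul_left hγ,
      hγ.trace_algebraMap_mul htrd]

end Ring

variable [DivisionRing D] [Algebra F D] [CharP F 2]

theorem eq_zero_of_forall_trace_eq_zero (hγ : IsFInvolution F γ)
    (htrd : ∀ z, z + γ z = algebraMap F D (trd z)) (hh : IsHermForm γ n h)
    (hani : HermAnisotropic n h) (halt : HermAlternating γ n h) {x : Fin n → D}
    (hx : ∀ y, trd (h x y) = 0) : x = 0 := by
  refine hani x (by_contra fun hxx ↦ hxx ?_)
  obtain ⟨b, hb⟩ := exists_eq_algebraMap_trace_of_mem_altSet htrd (halt x)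
  have : h x (rsmul x ((h x x)⁻¹ * b)) = b := by
    rw [hh.apply_rsmul_right hγ.map_one_s9, ← mul_assoc, mul_inv_cancel₀ hxx, one_mul]
  rw [hb, ← this, hx, map_zero]

theorem qFieldNonsingular_comp (hγ : IsFInvolution F γ)
    (htrd : ∀ z, z + γ z = algebraMap F D (trd z)) (hh : IsHermForm γ n h)
    (hani : HermAnisotropic n h) (halt : HermAlternating γ n h)
    (hq : ∀ x, algebraMap F D (q x) = h x x) (e : (Fin m → F) ≃ₗ[F] (Fin n → D)) :
    QFieldNonsingular m (q ∘ e) := by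
  intro v hv
  rw [← e.map_eq_zero_iff]
  refine eq_zero_of_forall_trace_eq_zero hγ htrd hh hani halt fun y ↦ ?_
  have := polarF_comp_eq_trace htrd hh hq e.toLinearMap v (e.symm y)
  simp only [LinearEquiv.coe_coe, LinearEquiv.apply_symm_apply] at this
  exact this ▸ hv (e.symm y)

theorem exists_quadForm_of_hermAlternating [Module.Finite F D] (hγ : IsFInvolution F γ)
    (htrd : ∀ z, z + γ z = algebraMap F D (trd z)) (hh : IsHermForm γ n h)
    (hani : HermAnisotropic n h) (halt : HermAlternating γ n h) :
    ∃ q : (Fin (Module.finrank F D * n) → F) → F, IsQuadFormField _ q ∧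
      QFieldNonsingular _ q ∧ QFieldAnisotropic _ q := by
  choose b hb using fun x ↦ exists_eq_algebraMap_trace_of_mem_altSet htrd (halt x)
  have hq : ∀ x, algebraMap F D (trd (b x)) = h x x := fun x ↦ (hb x).symm
  obtain ⟨e⟩ := nonempty_linearEquiv_fin_fun_pi (F := F) (D := D) n
  exact ⟨_, isQuadFormField_comp hγ htrd hh hq e.toLinearMap,
    qFieldNonsingular_comp hγ htrd hh hani halt hq e,
    qFieldAnisotropic_comp hani hq e.toLinearMap e.injective⟩

end TraceForm

theorem ENat.natCast_mul_biSup_le {S T : Set ℕ} {k : ℕ} (hST : ∀ m ∈ S, k * m ∈ T) :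
    (k : ℕ∞) * ⨆ m ∈ S, (m : ℕ∞) ≤ ⨆ n ∈ T, (n : ℕ∞) := by
  simp only [ENat.mul_iSup]
  exact iSup₂_le fun m hm ↦ by
    exact_mod_cast le_iSup₂ (f := fun n (_ : n ∈ T) ↦ (n : ℕ∞)) _ (hST m hm)

theorem stmt9_general {F Q : Type*} [Field F] [CharP F 2] [DivisionRing Q] [Algebra F Q]
    (hQ4 : Module.finrank F Q = 4)
    (γ : Q → Q) (hγ : IsFInvolution F γ)
    (trd : Q → F) (htrd : ∀ z : Q, z + γ z = algebraMap F Q (trd z)) :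
    (∀ (n : ℕ) (h : (Fin n → Q) → (Fin n → Q) → Q), IsHermForm γ n h →
      HermAnisotropic n h → HermAlternating γ n h →
      ∃ q : (Fin (4 * n) → F) → F, IsQuadFormField (4 * n) q ∧
        QFieldNonsingular (4 * n) q ∧ QFieldAnisotropic (4 * n) q) ∧
    4 * uHermMinus γ ≤ uTildeField F := by
  have : Module.Finite F Q := Module.finite_of_finrank_eq_succ hQ4
  have bound : ((4 : ℕ) : ℕ∞) * uHermMinus γ ≤ uTildeField F :=
    ENat.natCast_mul_biSup_le fun _ ⟨_, hh, hani, halt⟩ ↦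
      hQ4 ▸ exists_quadForm_of_hermAlternating hγ htrd hh hani halt
  exact ⟨fun _ _ hh hani halt ↦
    hQ4 ▸ exists_quadForm_of_hermAlternating hγ htrd hh hani halt, mod_cast bound⟩

/-- Let `Q` be an `F`-quaternion division algebra with canonical
involution `γ` (the involution with `x + γ x ∈ F` for all `x`). Every anisotropic
alternating hermitian form of dimension `n` over `(Q,γ)` yields an anisotropic
nonsingular quadratic form of dimension `4n` over `F`; hence `u⁻(Q) ≤ (1/4)·ũ(F)`. -/
theorem stmt9 {F Q : Type*} [Field F] [CharP F 2] [DivisionRing Q] [Algebra F Q]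
    [Algebra.IsCentral F Q] (hQ4 : Module.finrank F Q = 4)
    (γ : Q → Q) (hγ : IsFInvolution F γ)
    (trd : Q → F) (htrd : ∀ z : Q, z + γ z = algebraMap F Q (trd z)) :
    (∀ (n : ℕ) (h : (Fin n → Q) → (Fin n → Q) → Q), IsHermForm γ n h →
      HermAnisotropic n h → HermAlternating γ n h →
      ∃ q : (Fin (4 * n) → F) → F, IsQuadFormField (4 * n) q ∧
        QFieldNonsingular (4 * n) q ∧ QFieldAnisotropic (4 * n) q) ∧
    4 * uHermMinus γ ≤ uTildeField F :=
  stmt9_general hQ4 γ hγ trd htrd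

end GenQuadForm
end
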